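/- arXiv:2204.08404 — 8 statements merged into one kernel-verified Lean document; each statement's English description precedes it below -/
import Mathlib

section
/- For every monic polynomial p of degree d ≥ 1, there exists x in the interval [-1,1] such that |p(x)| ≥ 2^{1-d}. -/
open Polynomial Real

/-- degree bound and top coefficient of Chebyshev T. -/
lemma cheb_T_deg_coeff : ∀ n : ℕ, (Chebyshev.T ℝ (n+1)).natDegree ≤ n + 1 ∧
    (Chebyshev.T ℝ (n+1)).coeff (n+1) = 2 ^ n := by
  intro n
  induction n using Nat.strong_induction_on with
  | _ n ih =>
    match n with
    | 0 => simp [Chebyshev.T_one]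
    | 1 =>
      constructor
      · rw [show ((1:ℕ)+1 : ℤ) = 2 by norm_num, Chebyshev.T_two]
        compute_degree
      · rw [show ((1:ℕ)+1 : ℤ) = 2 by norm_num, Chebyshev.T_two]
        simp [coeff_sub, coeff_X_pow, coeff_one]
    | (m+2) =>
      have h1 := ih (m+1) (by omega)
      have h0 := ih m (by omega)
      have hrec : Chebyshev.T ℝ (((m+2:ℕ):ℤ)+1)
          = 2 * X * Chebyshev.T ℝ (((m+1:ℕ):ℤ)+1) - Chebyshev.T ℝ (((m:ℕ):ℤ)+1) := by
        have := Chebyshev.T_add_two ℝ (((m:ℕ):ℤ)+1)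
        convert this using 2 <;> push_cast <;> ring
      set q := Chebyshev.T ℝ (((m+1:ℕ):ℤ)+1) with hq
      set r := Chebyshev.T ℝ (((m:ℕ):ℤ)+1) with hr
      have h2X : (2 * X : ℝ[X]) = C 2 * X := by rw [map_ofNat]
      constructor
      · rw [hrec]
        refine le_trans (natDegree_sub_le _ _) ?_
        have : (2*X*q).natDegree ≤ (m+1+1) + 1 := by
          refine le_trans (natDegree_mul_le) ?_
          have : (2*X : ℝ[X]).natDegree ≤ 1 := by rw [h2X]; compute_degree
          omega
        have := h1.1; have := h0.1
        simp only [max_le_iff]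
        omega
      · rw [hrec, coeff_sub]
        have hr0 : r.coeff (m+2+1) = 0 :=
          coeff_eq_zero_of_natDegree_lt (by omega)
        have : (2*X*q).coeff (m+2+1) = 2 * q.coeff (m+1+1) := by
          rw [h2X, mul_assoc, coeff_C_mul, coeff_X_mul]
        rw [this, h1.2, hr0]
        ring

/-- For every monic polynomial `p` of degree `d ≥ 1`, there exists `x ∈ [-1,1]`
with `|p(x)| ≥ 2^{1-d}`. -/
theorem stmt_0 (d : ℕ) (hd : 1 ≤ d) (p : Polynomial ℝ) (hmonic : p.Monic)
    (hdeg : p.natDegree = d) :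
    ∃ x ∈ Set.Icc (-1 : ℝ) 1, (2 : ℝ) ^ ((1 : ℤ) - d) ≤ |p.eval x| := by
  by_contra hcon
  push_neg at hcon
  set c : ℝ := (2 : ℝ) ^ ((1 : ℤ) - d) with hcdef
  have hc : 0 < c := zpow_pos (by norm_num) _
  obtain ⟨m, hm⟩ : ∃ m : ℕ, d = m + 1 := ⟨d - 1, by omega⟩
  obtain ⟨hTdeg, hTcoeff⟩ := cheb_T_deg_coeff m
  have hdm : ((d : ℤ)) = ((m:ℕ):ℤ) + 1 := by push_cast [hm]; ring
  set T : ℝ[X] := Chebyshev.T ℝ d with hT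
  have hTeq : T = Chebyshev.T ℝ (((m:ℕ):ℤ)+1) := by rw [hT, hdm]
  set q : ℝ[X] := C c * T - p with hqdef
  -- degree facts
  have hq_le : q.natDegree ≤ d := by
    rw [hqdef]
    refine le_trans (natDegree_sub_le _ _) ?_
    have h1 : (C c * T).natDegree ≤ d := by
      refine le_trans (natDegree_mul_le) ?_
      simp only [natDegree_C, zero_add]
      rw [hTeq]; omega
    simp only [max_le_iff]
    exact ⟨h1, le_of_eq hdeg⟩
  have hq_coeff : q.coeff d = 0 := by
    have hTc : T.coeff d = 2 ^ m := by rw [hTeq, hm]; exact hTcoeff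
    have hpc : p.coeff d = 1 := by rw [← hdeg]; exact hmonic
    have hc1 : c * 2 ^ m = 1 := by
      rw [hcdef]
      have : (2:ℝ) ^ m = (2:ℝ) ^ ((m:ℤ)) := by rw [zpow_natCast]
      rw [this, ← zpow_add₀ (by norm_num : (2:ℝ) ≠ 0)]
      have : (1 : ℤ) - d + m = 0 := by omega
      rw [this, zpow_zero]
    rw [hqdef, coeff_sub, coeff_C_mul, hTc, hpc, hc1, sub_self]
  -- nodes
  set x : ℕ → ℝ := fun k => Real.cos (k * π / d) with hx
  have hd0 : (0:ℝ) < d := by exact_mod_cast hd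
  have hθ : ∀ k : ℕ, k ≤ d → (k * π / d) ∈ Set.Icc 0 π := by
    intro k hk
    constructor
    · positivity
    · rw [div_le_iff₀ hd0]
      have : (k:ℝ) ≤ d := by exact_mod_cast hk
      nlinarith [pi_pos]
  have hxanti : ∀ j k : ℕ, j ≤ k → k ≤ d → x k ≤ x j := by
    intro j k hjk hkd
    exact Real.strictAntiOn_cos.antitoneOn (hθ j (le_trans hjk hkd)) (hθ k hkd)
      (by gcongr <;> exact_mod_cast hjk)
  have hxstrict : ∀ j k : ℕ, j < k → k ≤ d → x k < x j := by
    intro j k hjk hkd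
    refine Real.strictAntiOn_cos (hθ j (by omega)) (hθ k hkd) ?_
    have : (j:ℝ) < k := by exact_mod_cast hjk
    gcongr
  have hxmem : ∀ k, x k ∈ Set.Icc (-1:ℝ) 1 := fun k => ⟨Real.neg_one_le_cos _, Real.cos_le_one _⟩
  -- evaluation at nodes
  have hqx : ∀ k : ℕ, q.eval (x k) = c * (-1:ℝ)^k - p.eval (x k) := by
    intro k
    have h1 : T.eval (x k) = Real.cos ((d:ℝ) * (k * π / d)) := by
      rw [hT, hx]
      exact_mod_cast Chebyshev.T_real_cos (k * π / d) (d : ℤ)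
    have h2 : (d:ℝ) * (k * π / d) = k * π := by field_simp
    have h3 : Real.cos ((k:ℝ) * π) = (-1:ℝ)^k := by
      simpa using Real.cos_add_nat_mul_pi 0 k
    rw [hqdef]
    simp only [eval_sub, eval_mul, eval_C, h1, h2, h3]
  -- sign alternation
  have hsign : ∀ k : ℕ, 0 < (-1:ℝ)^k * q.eval (x k) := by
    intro k
    have hp := abs_lt.1 (hcon (x k) (hxmem k))
    have hsq : ((-1:ℝ)^k) * ((-1:ℝ)^k) = 1 := by
      rw [← pow_add]
      exact Even.neg_one_pow ⟨k, rfl⟩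
    have key : (-1:ℝ)^k * q.eval (x k) = c - (-1:ℝ)^k * p.eval (x k) := by
      rw [hqx]; linear_combination c * hsq
    have habs : (-1:ℝ)^k * p.eval (x k) ≤ |p.eval (x k)| := by
      calc (-1:ℝ)^k * p.eval (x k) ≤ |(-1:ℝ)^k * p.eval (x k)| := le_abs_self _
        _ = |p.eval (x k)| := by rw [abs_mul, abs_pow, abs_neg, abs_one, one_pow, one_mul]
    have := hcon (x k) (hxmem k)
    rw [key]
    have := abs_lt.1 this
    linarith [lt_of_le_of_lt habs (hcon (x k) (hxmem k))]
  have hq0 : q ≠ 0 := by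
    intro h
    have := hsign 0
    rw [h] at this
    simp at this
  have hqdeg : q.natDegree < d := by
    rcases lt_or_eq_of_le hq_le with h | h
    · exact h
    · exfalso
      have : q.leadingCoeff = 0 := by rw [leadingCoeff, h]; exact hq_coeff
      exact hq0 (leadingCoeff_eq_zero.1 this)
  -- roots
  have hroots : ∀ k : Fin d, ∃ y, y ∈ Set.Ioo (x ((k:ℕ)+1)) (x (k:ℕ)) ∧ q.eval y = 0 := by
    rintro ⟨k, hk⟩
    simp only
    have hlt : x (k+1) < x k := hxstrict k (k+1) (by omega) (by omega)
    have hcont : ContinuousOn (fun t => q.eval t) (Set.Icc (x (k+1)) (x k)) :=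
      (Polynomial.continuous q).continuousOn
    rcases Nat.even_or_odd k with he | ho
    · have h1 : 0 < q.eval (x k) := by
        have := hsign k; rwa [he.neg_one_pow, one_mul] at this
      have h2 : q.eval (x (k+1)) < 0 := by
        have := hsign (k+1)
        rw [pow_succ, he.neg_one_pow, one_mul] at this; linarith
      obtain ⟨y, hy, hy0⟩ := intermediate_value_Ioo (le_of_lt hlt) hcont ⟨h2, h1⟩
      exact ⟨y, hy, hy0⟩
    · have h1 : q.eval (x k) < 0 := by
        have := hsign k; rw [ho.neg_one_pow] at this; linarith
      have h2 : 0 < q.eval (x (k+1)) := by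
        have := hsign (k+1)
        rw [pow_succ, ho.neg_one_pow] at this; linarith
      obtain ⟨y, hy, hy0⟩ := intermediate_value_Ioo' (le_of_lt hlt) hcont ⟨h1, h2⟩
      exact ⟨y, hy, hy0⟩
  choose y hy hy0 using hroots
  have hmono : ∀ j k : Fin d, j < k → y k < y j := by
    intro j k hjk
    have h1 : y k < x (k:ℕ) := (hy k).2
    have h2 : x ((j:ℕ)+1) < y j := (hy j).1
    have h3 : x (k:ℕ) ≤ x ((j:ℕ)+1) := hxanti _ _ (by omega) (by omega)
    linarith
  have hinj : Function.Injective y := by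
    intro a b hab
    rcases lt_trichotomy a b with h | h | h
    · exact absurd hab (ne_of_gt (hmono a b h))
    · exact h
    · exact absurd hab (ne_of_lt (hmono b a h))
  have hcard : d ≤ q.roots.toFinset.card := by
    have h := Finset.card_le_card_of_injOn (s := (Finset.univ : Finset (Fin d))) (t := q.roots.toFinset) y
      (fun k _ => by
        rw [Finset.mem_coe, Multiset.mem_toFinset, mem_roots']
        exact ⟨hq0, hy0 k⟩)
      (hinj.injOn)
    simpa using h
  have h1 : q.roots.toFinset.card ≤ Multiset.card q.roots := Multiset.toFinset_card_le _
  have h2 : Multiset.card q.roots ≤ q.natDegree := Polynomial.card_roots' q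
  omega
end

section
/- Let p(x) = ∑_{i=0}^d α_i x^i be a real polynomial of degree at most d and let η > 0. If |α_i| ≥ η for some index i ≥ 1, then there exists x ∈ [-1,1] such that |p(x)| ≥ 2^{-2d²} · η. -/
open Polynomial Finset

lemma coeff_prod_linear_bound {ι : Type*} [DecidableEq ι] (s : Finset ι) (a b : ι → ℝ) :
    ∀ k, |(∏ j ∈ s, (Polynomial.C (a j) * (Polynomial.X - Polynomial.C (b j)))).coeff k|
      ≤ ∏ j ∈ s, (|a j| * (1 + |b j|)) := by
  induction s using Finset.induction_on with
  | empty =>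
      intro k
      simp only [Finset.prod_empty, Polynomial.coeff_one]
      split <;> simp
  | insert _ _ hj ih =>
      rename_i j t
      intro k
      rw [Finset.prod_insert hj, Finset.prod_insert hj]
      set Q : Polynomial ℝ := ∏ i ∈ t, (Polynomial.C (a i) * (Polynomial.X - Polynomial.C (b i)))
        with hQ
      set B : ℝ := ∏ i ∈ t, (|a i| * (1 + |b i|)) with hB
      have hB0 : 0 ≤ B := Finset.prod_nonneg fun i _ => by positivity
      have expand : Polynomial.C (a j) * (Polynomial.X - Polynomial.C (b j)) * Q
          = Polynomial.C (a j) * (Polynomial.X * Q - Polynomial.C (b j) * Q) := by ring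
      rw [expand, Polynomial.coeff_C_mul, Polynomial.coeff_sub, Polynomial.coeff_C_mul]
      have hXQ : |(Polynomial.X * Q).coeff k| ≤ B := by
        cases k with
        | zero => simp [Polynomial.mul_coeff_zero, hB0]
        | succ n => rw [Polynomial.coeff_X_mul]; exact ih n
      have hQk : |Q.coeff k| ≤ B := ih k
      have h1 : |a j * ((Polynomial.X * Q).coeff k - b j * Q.coeff k)|
          ≤ |a j| * (|(Polynomial.X * Q).coeff k| + |b j| * |Q.coeff k|) := by
        rw [abs_mul]
        gcongr
        calc |(Polynomial.X * Q).coeff k - b j * Q.coeff k|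
            ≤ |(Polynomial.X * Q).coeff k| + |b j * Q.coeff k| := abs_sub _ _
          _ = |(Polynomial.X * Q).coeff k| + |b j| * |Q.coeff k| := by rw [abs_mul]
      refine h1.trans ?_
      nlinarith [mul_le_mul_of_nonneg_left hXQ (abs_nonneg (a j)),
        mul_le_mul_of_nonneg_left hQk (mul_nonneg (abs_nonneg (a j)) (abs_nonneg (b j))),
        abs_nonneg (a j), abs_nonneg (b j)]

/-- Anti-concentration: if a polynomial of degree at most `d` has some coefficient
`α_i` with `i ≥ 1` of absolute value at least `η > 0`, then there is `x ∈ [-1,1]`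
with `|p(x)| ≥ 2^{-2d²}·η`. -/
theorem stmt_2 (d : ℕ) (p : Polynomial ℝ) (hdeg : p.natDegree ≤ d) (η : ℝ) (hη : 0 < η)
    (h : ∃ i, 1 ≤ i ∧ i ≤ d ∧ η ≤ |p.coeff i|) :
    ∃ x ∈ Set.Icc (-1 : ℝ) 1, (2 : ℝ) ^ (-(2 * (d : ℤ) ^ 2)) * η ≤ |p.eval x| := by
  obtain ⟨i, hi1, hid, hcoeff⟩ := h
  have hd1 : 1 ≤ d := hi1.trans hid
  have hd0 : (0:ℝ) < d := by exact_mod_cast hd1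
  by_contra hcon
  push_neg at hcon
  set c : ℝ := (2 : ℝ) ^ (-(2 * (d : ℤ) ^ 2)) * η with hc
  have hcpos : 0 < c := by positivity
  -- p ≠ 0
  have hp0 : p ≠ 0 := by
    intro hp
    rw [hp] at hcoeff; simp at hcoeff; linarith
  -- nodes
  set v : ℕ → ℝ := fun j => (j : ℝ) / d with hv
  set s : Finset ℕ := Finset.range (d + 1) with hs
  have hvs : Set.InjOn v ↑s := by
    intro x _ y _ hxy
    simp only [hv] at hxy
    rw [div_left_inj' (ne_of_gt hd0)] at hxy
    exact_mod_cast hxy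
  have hdeglt : p.degree < (#s : ℕ) := by
    rw [hs, Finset.card_range]
    calc p.degree = (p.natDegree : WithBot ℕ) := (Polynomial.degree_eq_natDegree hp0)
      _ < ((d+1 : ℕ) : WithBot ℕ) := by exact_mod_cast Nat.lt_succ_of_le hdeg
  have hinterp := Lagrange.eq_interpolate hvs hdeglt
  -- coefficient formula
  have hcoeff_eq : p.coeff i = ∑ j ∈ s, p.eval (v j) * (Lagrange.basis s v j).coeff i := by
    conv_lhs => rw [hinterp]
    rw [Lagrange.interpolate_apply, Polynomial.finset_sum_coeff]
    exact Finset.sum_congr rfl fun j _ => by rw [Polynomial.coeff_C_mul]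
  -- bound on basis coefficients
  have hbasis : ∀ j ∈ s, |(Lagrange.basis s v j).coeff i| ≤ (2 * d) ^ d := by
    intro j hj
    have : Lagrange.basis s v j
        = ∏ l ∈ s.erase j, (Polynomial.C ((v j - v l)⁻¹) * (Polynomial.X - Polynomial.C (v l))) :=
      rfl
    rw [this]
    refine (coeff_prod_linear_bound (s.erase j) _ _ i).trans ?_
    have hcard : #(s.erase j) = d := by
      rw [Finset.card_erase_of_mem hj, hs, Finset.card_range]
      omega
    calc ∏ l ∈ s.erase j, (|(v j - v l)⁻¹| * (1 + |v l|))
        ≤ ∏ l ∈ s.erase j, ((2:ℝ) * d) := by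
          refine Finset.prod_le_prod (fun l _ => by positivity) ?_
          intro l hl
          have hlj : l ≠ j := Finset.ne_of_mem_erase hl
          have hls : l ∈ s := Finset.mem_of_mem_erase hl
          have hld : (l : ℝ) ≤ d := by
            have : l ≤ d := Nat.lt_succ_iff.mp (Finset.mem_range.mp hls)
            exact_mod_cast this
          have h1 : (1:ℝ) ≤ |(j : ℝ) - l| := by
            have : (j : ℝ) ≠ l := by
              intro hh; exact hlj (by exact_mod_cast hh.symm)
            have hne : (j : ℤ) - l ≠ 0 := by
              intro hh
              apply this
              have : (j : ℤ) = l := by linarith [hh]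
              exact_mod_cast this
            have := Int.one_le_abs hne
            calc (1:ℝ) ≤ |((j : ℤ) - l : ℤ)| := by exact_mod_cast this
              _ = |(j : ℝ) - l| := by push_cast [Int.cast_abs]; ring_nf
          have hvjl : (1:ℝ)/d ≤ |v j - v l| := by
            have : v j - v l = ((j:ℝ) - l)/d := by rw [hv]; ring
            rw [this, abs_div, abs_of_pos hd0]
            exact div_le_div_of_nonneg_right h1 hd0.le
          have hinv : |(v j - v l)⁻¹| ≤ d := by
            have hpos : (0:ℝ) < |v j - v l| := lt_of_lt_of_le (by positivity) hvjl
            rw [abs_inv, inv_le_comm₀ hpos hd0]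
            rw [one_div] at hvjl
            exact hvjl
          have hvl : (1:ℝ) + |v l| ≤ 2 := by
            have : |v l| ≤ 1 := by
              rw [hv, abs_div, abs_of_pos hd0, abs_of_nonneg (by positivity : (0:ℝ) ≤ (l:ℝ))]
              rw [div_le_one hd0]; exact hld
            linarith
          calc |(v j - v l)⁻¹| * (1 + |v l|) ≤ (d : ℝ) * 2 := by
                apply mul_le_mul hinv hvl (by positivity) (le_of_lt hd0)
            _ = 2 * d := by ring
      _ = (2 * (d:ℝ)) ^ d := by rw [Finset.prod_const, hcard]
  -- nodes are in [-1, 1] so p is small there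
  have hsmall : ∀ j ∈ s, |p.eval (v j)| < c := by
    intro j hj
    apply hcon
    constructor
    · have : (0:ℝ) ≤ v j := by positivity
      linarith
    · rw [hv]
      have : (j : ℝ) ≤ d := by
        exact_mod_cast Nat.lt_succ_iff.mp (Finset.mem_range.mp hj)
      rw [div_le_one hd0]; exact this
  -- combine
  have hsum : |p.coeff i| < (d + 1) * (c * (2 * d) ^ d) := by
    rw [hcoeff_eq]
    calc |∑ j ∈ s, p.eval (v j) * (Lagrange.basis s v j).coeff i|
        ≤ ∑ j ∈ s, |p.eval (v j) * (Lagrange.basis s v j).coeff i| :=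
          Finset.abs_sum_le_sum_abs _ _
      _ < ∑ j ∈ s, c * (2 * d) ^ d := by
          refine Finset.sum_lt_sum_of_nonempty ⟨0, by simp [hs]⟩ ?_
          intro j hj
          rw [abs_mul]
          calc |p.eval (v j)| * |(Lagrange.basis s v j).coeff i|
              ≤ |p.eval (v j)| * (2 * d) ^ d := by
                exact mul_le_mul_of_nonneg_left (hbasis j hj) (abs_nonneg _)
            _ < c * (2 * d) ^ d := by
                apply mul_lt_mul_of_pos_right (hsmall j hj) (by positivity)
      _ = (d + 1) * (c * (2 * d) ^ d) := by
          rw [Finset.sum_const, hs, Finset.card_range]; push_cast; ring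
  -- numeric bound: (d+1) * (2d)^d ≤ 2^(2d^2)
  have hnum : ((d:ℝ) + 1) * (2 * d) ^ d ≤ 2 ^ (2 * d^2) := by
    have hN : (d + 1) * (2 * d) ^ d ≤ 2 ^ (2 * d ^ 2) := by
      rcases Nat.lt_or_ge d 2 with hd2 | hd2
      · interval_cases d
        · norm_num
      · have h1 : d + 1 ≤ 2 ^ d := Nat.succ_le_of_lt (Nat.lt_two_pow_self (n := d))
        have h2 : d ^ d ≤ 2 ^ (d * d) := by
          calc d ^ d ≤ (2 ^ d) ^ d := Nat.pow_le_pow_left (Nat.le_of_lt (Nat.lt_two_pow_self (n := d))) d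
            _ = 2 ^ (d * d) := by rw [← pow_mul]
        calc (d + 1) * (2 * d) ^ d = (d + 1) * (2 ^ d * d ^ d) := by rw [mul_pow]
          _ ≤ 2 ^ d * (2 ^ d * 2 ^ (d * d)) := by
              exact Nat.mul_le_mul h1 (Nat.mul_le_mul_left _ h2)
          _ = 2 ^ (d + d + d * d) := by ring
          _ ≤ 2 ^ (2 * d ^ 2) := by
              apply Nat.pow_le_pow_right (by norm_num)
              nlinarith
    exact_mod_cast hN
  have hfinal : (d + 1 : ℝ) * (c * (2 * d) ^ d) ≤ η := by
    have : ((d:ℝ) + 1) * (c * (2 * d) ^ d) = (((d:ℝ) + 1) * (2 * d) ^ d) * c := by ring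
    rw [this]
    calc (((d:ℝ) + 1) * (2 * d) ^ d) * c ≤ (2:ℝ) ^ (2 * d ^ 2) * c := by
          apply mul_le_mul_of_nonneg_right hnum (le_of_lt hcpos)
      _ = η := by
          rw [hc]
          rw [show ((2:ℝ) ^ (2 * d ^ 2) : ℝ) = (2:ℝ) ^ ((2 * (d:ℤ) ^ 2)) by
            rw [← zpow_natCast]; push_cast; ring_nf]
          rw [← mul_assoc, ← zpow_add₀ (by norm_num : (2:ℝ) ≠ 0)]
          simp
  linarith [hcoeff, hsum, hfinal]
end

section
/- Fix η > 0 and 0 < m < 1, and let p(x) = ∑_{i=0}^d α_i x^i be a degree-d polynomial. If |α_i| ≥ η for some i ∈ {1,...,d}, then there exists x ∈ [-m, m] with |p(x)| ≥ 2^{-2d²} · m^d · η. -/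
open Polynomial Finset

/-- Coefficients of a product of monic linear factors with roots in `[-1,1]`
are bounded by `2 ^ card`. -/
lemma coeff_prod_X_sub_C_bound {ι : Type*} [DecidableEq ι] (t : Finset ι) (c : ι → ℝ)
    (hc : ∀ k ∈ t, |c k| ≤ 1) :
    ∀ i, |(∏ k ∈ t, (X - C (c k))).coeff i| ≤ 2 ^ t.card := by
  induction t using Finset.induction_on with
  | empty =>
      intro i
      simp only [Finset.prod_empty, Finset.card_empty, pow_zero]
      rcases Nat.eq_zero_or_pos i with hi | hi
      · subst hi; simp
      · rw [Polynomial.coeff_one, if_neg (by omega)]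
        simp
  | insert _ _ ha ih =>
      rename_i a t'
      intro i
      rw [Finset.prod_insert ha, Finset.card_insert_of_notMem ha]
      have hc' : ∀ k ∈ t', |c k| ≤ 1 := fun k hk => hc k (Finset.mem_insert_of_mem hk)
      have hca : |c a| ≤ 1 := hc a (Finset.mem_insert_self a t')
      have key : ((X - C (c a)) * ∏ k ∈ t', (X - C (c k))).coeff i
          = (X * ∏ k ∈ t', (X - C (c k))).coeff i - c a * (∏ k ∈ t', (X - C (c k))).coeff i := by
        rw [sub_mul, Polynomial.coeff_sub, Polynomial.coeff_C_mul]
      rw [key]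
      have h1 : |(X * ∏ k ∈ t', (X - C (c k))).coeff i| ≤ 2 ^ t'.card := by
        rcases i with _ | n
        · rw [Polynomial.mul_coeff_zero, Polynomial.coeff_X_zero, zero_mul, abs_zero]
          positivity
        · rw [Polynomial.coeff_X_mul]
          exact ih hc' n
      have h2 : |c a * (∏ k ∈ t', (X - C (c k))).coeff i| ≤ 2 ^ t'.card := by
        rw [abs_mul]
        calc |c a| * |(∏ k ∈ t', (X - C (c k))).coeff i|
            ≤ 1 * (2 ^ t'.card) := mul_le_mul hca (ih hc' i) (abs_nonneg _) zero_le_one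
          _ = 2 ^ t'.card := one_mul _
      calc |(X * ∏ k ∈ t', (X - C (c k))).coeff i - c a * (∏ k ∈ t', (X - C (c k))).coeff i|
          ≤ |(X * ∏ k ∈ t', (X - C (c k))).coeff i|
            + |c a * (∏ k ∈ t', (X - C (c k))).coeff i| := abs_sub _ _
        _ ≤ 2 ^ t'.card + 2 ^ t'.card := add_le_add h1 h2
        _ = 2 ^ (t'.card + 1) := by ring

/-- Scaled anti-concentration: if a polynomial of degree at most `d` has some
coefficient `α_i`, `1 ≤ i ≤ d`, with `|α_i| ≥ η`, then for `0 < m < 1` there is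
`x ∈ [-m,m]` with `|p(x)| ≥ 2^{-2d²}·m^d·η`. -/
theorem stmt_3 (d : ℕ) (m η : ℝ) (hη : 0 < η) (hm : 0 < m) (hm1 : m < 1)
    (p : Polynomial ℝ) (hdeg : p.natDegree ≤ d)
    (h : ∃ i, 1 ≤ i ∧ i ≤ d ∧ η ≤ |p.coeff i|) :
    ∃ x ∈ Set.Icc (-m) m, (2 : ℝ) ^ (-(2 * (d : ℤ) ^ 2)) * m ^ d * η ≤ |p.eval x| := by
  obtain ⟨i, hi1, hid, hcoeff⟩ := h
  have hBval : (2 : ℝ) ^ (-(2 * (d : ℤ) ^ 2)) * m ^ d * η = m ^ d * η / 2 ^ (2 * d ^ 2) := by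
    rw [zpow_neg]
    have h2 : ((2 : ℝ) ^ (2 * (d : ℤ) ^ 2)) = (2 : ℝ) ^ (2 * d ^ 2) := by
      rw [show (2 * (d : ℤ) ^ 2) = ((2 * d ^ 2 : ℕ) : ℤ) by push_cast; ring, zpow_natCast]
    rw [h2]; ring
  rw [hBval]
  set B : ℝ := m ^ d * η / 2 ^ (2 * d ^ 2) with hBdef
  by_contra hcon
  push_neg at hcon
  have hd1 : 1 ≤ d := hi1.trans hid
  have hmm : -m ≤ m := by linarith
  rcases Nat.lt_or_ge d 2 with hd2 | hd2
  · -- degree 1 case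
    have hd : d = 1 := by omega
    subst hd
    have hi : i = 1 := by omega
    subst hi
    have hp1 : p = C (p.coeff 1) * X + C (p.coeff 0) :=
      Polynomial.eq_X_add_C_of_natDegree_le_one hdeg
    have hem : p.eval m = p.coeff 1 * m + p.coeff 0 := by rw [hp1]; simp
    have henm : p.eval (-m) = p.coeff 1 * (-m) + p.coeff 0 := by rw [hp1]; simp
    have h1 : |p.eval m| < B := hcon m ⟨hmm, le_refl m⟩
    have h2 : |p.eval (-m)| < B := hcon (-m) ⟨le_refl (-m), hmm⟩
    have h3 : |p.eval m - p.eval (-m)| ≤ |p.eval m| + |p.eval (-m)| := abs_sub _ _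
    have h4 : p.eval m - p.eval (-m) = 2 * m * p.coeff 1 := by
      rw [hem, henm]; ring
    have h5 : 2 * m * η ≤ |p.eval m - p.eval (-m)| := by
      rw [h4, abs_mul, abs_of_pos (by linarith : (0:ℝ) < 2 * m)]
      have := mul_le_mul_of_nonneg_left hcoeff (by linarith : (0:ℝ) ≤ 2 * m)
      linarith
    have hBv : B = m * η / 4 := by
      rw [hBdef]; norm_num
    rw [hBv] at h1 h2
    have hmη : 0 < m * η := mul_pos hm hη
    nlinarith
  · -- degree ≥ 2 : Lagrange interpolation at points m, m/2, ..., m/2^d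
    set v : Fin (d + 1) → ℝ := fun j => m * (1 / 2 : ℝ) ^ (j : ℕ) with hv
    have hhalf : (0:ℝ) < 1/2 := by norm_num
    have hvpos : ∀ j, 0 < v j := fun j => mul_pos hm (by positivity)
    have hvle : ∀ j, v j ≤ m := fun j => by
      have : (1/2:ℝ) ^ (j:ℕ) ≤ 1 := pow_le_one₀ (by norm_num) (by norm_num)
      calc m * (1/2:ℝ)^(j:ℕ) ≤ m * 1 := by nlinarith
        _ = m := mul_one m
    have hvmem : ∀ j, v j ∈ Set.Icc (-m) m := fun j =>
      ⟨le_trans (by linarith [hvpos j]) (le_refl _), hvle j⟩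
    have powinj : ∀ a b : ℕ, (1/2:ℝ) ^ a = (1/2) ^ b → a = b := by
      intro a b hab
      by_contra hne
      rcases Nat.lt_or_ge a b with hl | hg
      · have hlt := pow_lt_pow_right_of_lt_one₀ hhalf (by norm_num) hl
        rw [hab] at hlt
        exact lt_irrefl _ hlt
      · have hl : b < a := by omega
        have hlt := pow_lt_pow_right_of_lt_one₀ hhalf (by norm_num) hl
        rw [hab] at hlt
        exact lt_irrefl _ hlt
    have hvinj : Set.InjOn v (Finset.univ : Finset (Fin (d+1))) := by
      intro j _ k _ hjk
      have h' : (1/2:ℝ) ^ (j:ℕ) = (1/2) ^ (k:ℕ) := mul_left_cancel₀ hm.ne' hjk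
      exact Fin.ext (powinj _ _ h')
    -- separation of nodes
    have hsep : ∀ j k : Fin (d+1), j ≠ k → m * (1/2:ℝ)^d ≤ |v j - v k| := by
      have core : ∀ a b : ℕ, a < b → b ≤ d → m * (1/2:ℝ)^d ≤ m * (1/2)^a - m * (1/2)^b := by
        intro a b hab hbd
        have hb1 : b - 1 + 1 = b := by omega
        have h2 : (1/2:ℝ) ^ (b - 1) * (1/2) = (1/2) ^ b := by
          rw [← pow_succ, hb1]
        have h3 : (1/2:ℝ) ^ (b-1) ≤ (1/2) ^ a :=
          pow_le_pow_of_le_one (by norm_num) (by norm_num) (by omega)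
        have h4 : (1/2:ℝ) ^ b ≥ (0:ℝ) := by positivity
        have h5 : (1/2:ℝ) ^ d ≤ (1/2) ^ b :=
          pow_le_pow_of_le_one (by norm_num) (by norm_num) hbd
        nlinarith [hm.le]
      intro j k hjk
      rcases lt_trichotomy (j:ℕ) (k:ℕ) with hl | he | hl
      · have := core j k hl (by omega)
        calc m * (1/2:ℝ)^d ≤ v j - v k := this
          _ ≤ |v j - v k| := le_abs_self _
      · exact absurd (Fin.ext he) hjk
      · have := core k j hl (by omega)
        rw [abs_sub_comm]
        calc m * (1/2:ℝ)^d ≤ v k - v j := this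
          _ ≤ |v k - v j| := le_abs_self _
    -- Lagrange interpolation identity for coefficients
    have hcard : (Finset.univ : Finset (Fin (d+1))).card = d + 1 := by simp
    have hdeglt : p.degree < ((Finset.univ : Finset (Fin (d+1))).card : WithBot ℕ) := by
      rw [hcard]
      calc p.degree ≤ (p.natDegree : WithBot ℕ) := Polynomial.degree_le_natDegree
        _ ≤ (d : WithBot ℕ) := by exact_mod_cast hdeg
        _ < ((d + 1 : ℕ) : WithBot ℕ) := by exact_mod_cast Nat.lt_succ_self d
    have hinterp := Lagrange.eq_interpolate (s := (Finset.univ : Finset (Fin (d+1)))) (v := v)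
      (f := p) hvinj hdeglt
    have hcoeq : p.coeff i
        = ∑ j : Fin (d+1), p.eval (v j) * (Lagrange.basis Finset.univ v j).coeff i := by
      conv_lhs => rw [hinterp]
      rw [Lagrange.interpolate_apply, Polynomial.finset_sum_coeff]
      exact Finset.sum_congr rfl fun j _ => by rw [Polynomial.coeff_C_mul]
    -- bound on basis coefficients
    set K : ℝ := ((m * (1/2:ℝ)^d)⁻¹) ^ d * 2 ^ d with hKdef
    have hKpos : 0 < K := by positivity
    have hbasisbound : ∀ j : Fin (d+1), |(Lagrange.basis Finset.univ v j).coeff i| ≤ K := by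
      intro j
      have hbasis : Lagrange.basis Finset.univ v j
          = C (∏ k ∈ Finset.univ.erase j, (v j - v k)⁻¹)
            * ∏ k ∈ Finset.univ.erase j, (X - C (v k)) := by
        rw [Lagrange.basis]
        simp_rw [Lagrange.basisDivisor]
        rw [Finset.prod_mul_distrib, map_prod]
      have hcarde : (Finset.univ.erase j).card = d := by
        rw [Finset.card_erase_of_mem (Finset.mem_univ j), hcard]
        omega
      rw [hbasis, Polynomial.coeff_C_mul, abs_mul]
      have hnum : |(∏ k ∈ Finset.univ.erase j, (X - C (v k))).coeff i| ≤ 2 ^ d := by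
        have := coeff_prod_X_sub_C_bound (Finset.univ.erase j) v
          (fun k _ => by
            rw [abs_of_pos (hvpos k)]
            exact le_trans (hvle k) hm1.le) i
        rwa [hcarde] at this
      have hden : |∏ k ∈ Finset.univ.erase j, (v j - v k)⁻¹| ≤ ((m * (1/2:ℝ)^d)⁻¹) ^ d := by
        rw [Finset.abs_prod]
        have : ∀ k ∈ Finset.univ.erase j, |(v j - v k)⁻¹| ≤ (m * (1/2:ℝ)^d)⁻¹ := by
          intro k hk
          rw [abs_inv]
          exact inv_anti₀ (by positivity) (hsep j k (Finset.ne_of_mem_erase hk).symm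
            |>.trans_eq rfl)
        calc ∏ k ∈ Finset.univ.erase j, |(v j - v k)⁻¹|
            ≤ ∏ _k ∈ Finset.univ.erase j, (m * (1/2:ℝ)^d)⁻¹ :=
              Finset.prod_le_prod (fun k _ => abs_nonneg _) this
          _ = ((m * (1/2:ℝ)^d)⁻¹) ^ d := by rw [Finset.prod_const, hcarde]
      calc |∏ k ∈ Finset.univ.erase j, (v j - v k)⁻¹|
            * |(∏ k ∈ Finset.univ.erase j, (X - C (v k))).coeff i|
          ≤ ((m * (1/2:ℝ)^d)⁻¹) ^ d * 2 ^ d :=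
            mul_le_mul hden hnum (abs_nonneg _) (by positivity)
        _ = K := rfl
    -- combine
    have hub : |p.coeff i| ≤ ∑ j : Fin (d+1), |p.eval (v j)| * |(Lagrange.basis Finset.univ v j).coeff i| := by
      rw [hcoeq]
      refine le_trans (Finset.abs_sum_le_sum_abs _ _) ?_
      exact le_of_eq (Finset.sum_congr rfl fun j _ => abs_mul _ _)
    have hstrict : ∑ j : Fin (d+1), |p.eval (v j)| * |(Lagrange.basis Finset.univ v j).coeff i|
        < ∑ _j : Fin (d+1), B * K := by
      apply Finset.sum_lt_sum_of_nonempty Finset.univ_nonempty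
      intro j _
      calc |p.eval (v j)| * |(Lagrange.basis Finset.univ v j).coeff i|
          ≤ |p.eval (v j)| * K :=
            mul_le_mul_of_nonneg_left (hbasisbound j) (abs_nonneg _)
        _ < B * K := mul_lt_mul_of_pos_right (hcon (v j) (hvmem j)) hKpos
    have hsumconst : ∑ _j : Fin (d+1), B * K = (d + 1 : ℝ) * (B * K) := by
      rw [Finset.sum_const, hcard, nsmul_eq_mul]
      push_cast
      ring
    -- numeric contradiction
    have h12 : ((1:ℝ)/2) ^ d = ((2:ℝ) ^ d)⁻¹ := by rw [one_div, inv_pow]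
    have hKval : K = 2 ^ (d ^ 2 + d) / m ^ d := by
      rw [hKdef, h12, mul_inv, inv_inv, mul_pow, inv_pow, ← pow_mul]
      rw [pow_add, sq]
      field_simp

    have hBK : B * K = η * 2 ^ (d ^ 2 + d) / 2 ^ (2 * d ^ 2) := by
      rw [hBdef, hKval]
      field_simp
    have hnat : (d + 1) * 2 ^ (d ^ 2 + d) ≤ 2 ^ (2 * d ^ 2) := by
      calc (d + 1) * 2 ^ (d ^ 2 + d) ≤ 2 ^ d * 2 ^ (d ^ 2 + d) :=
            Nat.mul_le_mul_right _ (Nat.lt_two_pow_self)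
        _ = 2 ^ (d ^ 2 + 2 * d) := by rw [← pow_add]; ring_nf
        _ ≤ 2 ^ (2 * d ^ 2) := Nat.pow_le_pow_right (by norm_num) (by nlinarith)
    have hfinal : (d + 1 : ℝ) * (B * K) ≤ η := by
      rw [hBK]
      calc (d + 1 : ℝ) * (η * 2 ^ (d ^ 2 + d) / 2 ^ (2 * d ^ 2))
          = η * (((d + 1) * 2 ^ (d ^ 2 + d)) / 2 ^ (2 * d ^ 2)) := by ring
        _ ≤ η * 1 := by
            apply mul_le_mul_of_nonneg_left _ hη.le
            rw [div_le_one (by positivity)]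
            exact_mod_cast hnat
        _ = η := mul_one η
    have : η < η :=
      lt_of_le_of_lt (hcoeff.trans hub) (lt_of_lt_of_le (hstrict.trans_eq hsumconst) hfinal)
    exact absurd this (lt_irrefl η)
end

section
/- Let f be a univariate real polynomial of degree at most d, and let ĉ_0, ..., ĉ_d be the Chebyshev nodes ĉ_k = cos(π(k+1/2)/(d+1)) of the (d+1)-st Chebyshev polynomial. If |f(ĉ_k)| ≤ ε for every k ∈ {0,...,d}, then |f(x)| ≤ √2 · (d+1) · ε for every x ∈ [-1,1]. -/
open Polynomial Finset Real

lemma cheb_deg_coeff : ∀ n : ℕ, (Polynomial.Chebyshev.T ℝ n).natDegree ≤ n ∧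
    (Polynomial.Chebyshev.T ℝ n).coeff n = 2 ^ (n - 1) := by
  intro n
  induction n using Nat.strong_induction_on with
  | _ n ih =>
    match n with
    | 0 => simp [Polynomial.Chebyshev.T_zero]
    | 1 => simp [Polynomial.Chebyshev.T_one]
    | (n+2) =>
      obtain ⟨hd1, hc1⟩ := ih (n+1) (by omega)
      obtain ⟨hd0, hc0⟩ := ih n (by omega)
      have hrec : Polynomial.Chebyshev.T ℝ ((n:ℕ)+2 : ℕ) =
          2 * X * Polynomial.Chebyshev.T ℝ ((n+1 : ℕ)) - Polynomial.Chebyshev.T ℝ (n : ℕ) := by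
        push_cast
        exact Polynomial.Chebyshev.T_add_two ℝ n
      constructor
      · rw [hrec]
        refine le_trans (natDegree_sub_le _ _) (max_le ?_ (by omega))
        refine le_trans (natDegree_mul_le) ?_
        have : (2 * X : ℝ[X]).natDegree ≤ 1 := by
          refine le_trans natDegree_mul_le ?_
          simp
        omega
      · rw [hrec]
        have hX : (2 * X * Polynomial.Chebyshev.T ℝ ((n+1:ℕ))) =
            Polynomial.C 2 * (X * Polynomial.Chebyshev.T ℝ ((n+1:ℕ))) := by
          rw [← mul_assoc]; norm_num; exact Or.inl (by norm_cast)
        rw [coeff_sub, hX, coeff_C_mul, coeff_X_mul, hc1,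
          coeff_eq_zero_of_natDegree_lt (by omega : (Polynomial.Chebyshev.T ℝ (n:ℕ)).natDegree < n + 2)]
        simp [pow_succ]
        ring

lemma cheb_span : ∀ (d : ℕ) (f : Polynomial ℝ), f.natDegree ≤ d →
    ∃ b : ℕ → ℝ, f = ∑ i ∈ Finset.range (d+1), Polynomial.C (b i) * Polynomial.Chebyshev.T ℝ i := by
  intro d
  induction d with
  | zero =>
    intro f hf
    refine ⟨fun _ => f.coeff 0, ?_⟩
    rw [Polynomial.eq_C_of_natDegree_le_zero hf]
    simp [Polynomial.Chebyshev.T_zero]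
  | succ d ih =>
    intro f hf
    set c := f.coeff (d+1) / 2^d with hc
    set g := f - Polynomial.C c * Polynomial.Chebyshev.T ℝ ((d+1 : ℕ)) with hgdef
    have hTd := cheb_deg_coeff (d+1)
    have hg : g.natDegree ≤ d := by
      rw [Polynomial.natDegree_le_iff_coeff_eq_zero]
      intro m hm
      rw [hgdef, coeff_sub, coeff_C_mul]
      rcases eq_or_lt_of_le (Nat.succ_le_of_lt hm) with hm1 | hm1
      · rw [← hm1, hTd.2]
        simp only [Nat.add_sub_cancel, hc]
        field_simp
        simp
      · rw [coeff_eq_zero_of_natDegree_lt (lt_of_le_of_lt hf hm1),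
          coeff_eq_zero_of_natDegree_lt (lt_of_le_of_lt hTd.1 hm1)]
        ring
    obtain ⟨b, hb⟩ := ih g hg
    refine ⟨fun i => if i = d+1 then c else b i, ?_⟩
    rw [Finset.sum_range_succ]
    simp only [if_pos rfl]
    have : ∑ i ∈ Finset.range (d+1), Polynomial.C (if i = d+1 then c else b i) * Polynomial.Chebyshev.T ℝ i
        = ∑ i ∈ Finset.range (d+1), Polynomial.C (b i) * Polynomial.Chebyshev.T ℝ i := by
      refine Finset.sum_congr rfl fun i hi => ?_
      rw [if_neg (by simp at hi; omega)]
    rw [this, ← hb, hgdef]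
    simp

lemma cheb_S (d : ℕ) (m : ℕ) (h1 : 1 ≤ m) (h2 : m ≤ 2*d+1) :
    ∑ k ∈ Finset.range (d+1),
      Real.cos ((m:ℝ) * (Real.pi * ((k:ℝ) + 1/2) / ((d:ℝ)+1))) = 0 := by
  have hd : (0:ℝ) < (d:ℝ) + 1 := by positivity
  set A := (m:ℝ) * Real.pi / (2*((d:ℝ)+1)) with hA
  have hApos : 0 < A := by
    have := Real.pi_pos
    have hm : (0:ℝ) < m := by exact_mod_cast h1
    positivity
  have hAlt : A < Real.pi := by
    rw [hA, div_lt_iff₀ (by positivity)]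
    have : (m:ℝ) < 2*((d:ℝ)+1) := by
      have : (m:ℝ) ≤ 2*(d:ℝ)+1 := by exact_mod_cast h2
      linarith
    nlinarith [Real.pi_pos]
  have hsA : 0 < Real.sin A := Real.sin_pos_of_pos_of_lt_pi hApos hAlt
  set G : ℕ → ℝ := fun k => Real.sin ((m:ℝ) * Real.pi * (k:ℝ) / ((d:ℝ)+1)) with hG
  have key : ∀ k : ℕ, Real.cos ((m:ℝ) * (Real.pi * ((k:ℝ) + 1/2) / ((d:ℝ)+1)))
      = (G (k+1) - G k) / (2 * Real.sin A) := by
    intro k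
    rw [hG]
    simp only []
    rw [eq_div_iff (by positivity)]
    push_cast
    rw [Real.sin_sub_sin]
    have e1 : ((m:ℝ) * Real.pi * ((k:ℝ)+1) / ((d:ℝ)+1) - (m:ℝ) * Real.pi * (k:ℝ) / ((d:ℝ)+1))/2 = A := by
      rw [hA]; field_simp; ring
    have e2 : ((m:ℝ) * Real.pi * ((k:ℝ)+1) / ((d:ℝ)+1) + (m:ℝ) * Real.pi * (k:ℝ) / ((d:ℝ)+1))/2
        = (m:ℝ) * (Real.pi * ((k:ℝ) + 1/2) / ((d:ℝ)+1)) := by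
      field_simp; ring
    rw [e1, e2]
    ring
  calc ∑ k ∈ Finset.range (d+1), Real.cos ((m:ℝ) * (Real.pi * ((k:ℝ) + 1/2) / ((d:ℝ)+1)))
      = ∑ k ∈ Finset.range (d+1), (G (k+1) - G k) / (2 * Real.sin A) :=
        Finset.sum_congr rfl fun k _ => key k
    _ = (G (d+1) - G 0) / (2 * Real.sin A) := by
        rw [← Finset.sum_div, Finset.sum_range_sub]
    _ = 0 := by
        have hGd : G (d+1) = 0 := by
          rw [hG]
          have : (m:ℝ) * Real.pi * ((d:ℝ)+1) / ((d:ℝ)+1) = (m:ℝ) * Real.pi := by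
            field_simp
          push_cast
          rw [this, Real.sin_nat_mul_pi]
        have hG0 : G 0 = 0 := by simp [hG]
        rw [hGd, hG0]
        simp

lemma cheb_Ssum (d : ℕ) (m : ℕ) (h2 : m ≤ 2*d+1) :
    ∑ k ∈ Finset.range (d+1),
      Real.cos ((m:ℝ) * (Real.pi * ((k:ℝ) + 1/2) / ((d:ℝ)+1)))
      = if m = 0 then (d:ℝ)+1 else 0 := by
  rcases Nat.eq_zero_or_pos m with hm | hm
  · subst hm; simp
  · rw [if_neg (by omega), cheb_S d m hm h2]

lemma cheb_orth (d : ℕ) (i j : ℕ) (hi : i ≤ d) (hj : j ≤ d) :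
    ∑ k ∈ Finset.range (d+1),
      Real.cos ((i:ℝ) * (Real.pi * ((k:ℝ) + 1/2) / ((d:ℝ)+1))) *
      Real.cos ((j:ℝ) * (Real.pi * ((k:ℝ) + 1/2) / ((d:ℝ)+1)))
      = if i = j then (if i = 0 then (d:ℝ)+1 else ((d:ℝ)+1)/2) else 0 := by
  wlog hle : j ≤ i with H
  · have := H d j i hj hi (by omega)
    calc _ = ∑ k ∈ Finset.range (d+1),
        Real.cos ((j:ℝ) * (Real.pi * ((k:ℝ) + 1/2) / ((d:ℝ)+1))) *
        Real.cos ((i:ℝ) * (Real.pi * ((k:ℝ) + 1/2) / ((d:ℝ)+1))) :=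
          Finset.sum_congr rfl fun k _ => mul_comm _ _
      _ = _ := by
          rw [this]
          have hij : i ≠ j := by omega
          simp [hij, Ne.symm hij]
  -- now j ≤ i
  have key : ∀ k : ℕ,
      Real.cos ((i:ℝ) * (Real.pi * ((k:ℝ) + 1/2) / ((d:ℝ)+1))) *
      Real.cos ((j:ℝ) * (Real.pi * ((k:ℝ) + 1/2) / ((d:ℝ)+1)))
      = (Real.cos (((i+j : ℕ):ℝ) * (Real.pi * ((k:ℝ) + 1/2) / ((d:ℝ)+1)))
        + Real.cos (((i-j : ℕ):ℝ) * (Real.pi * ((k:ℝ) + 1/2) / ((d:ℝ)+1)))) / 2 := by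
    intro k
    have hcast : ((i-j : ℕ):ℝ) = (i:ℝ) - (j:ℝ) := by
      push_cast [Nat.cast_sub hle]; ring
    rw [hcast]
    push_cast
    set θ := Real.pi * ((k:ℝ) + 1/2) / ((d:ℝ)+1)
    rw [add_mul, sub_mul, Real.cos_add, Real.cos_sub]
    ring
  rw [Finset.sum_congr rfl fun k _ => key k, ← Finset.sum_div, Finset.sum_add_distrib,
    cheb_Ssum d (i+j) (by omega), cheb_Ssum d (i-j) (by omega)]
  rcases eq_or_ne i j with rfl | hij
  · rcases eq_or_ne i 0 with rfl | hi0
    · norm_num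
    · have : i + i ≠ 0 := by omega
      simp [this, hi0]
  · have h1 : i + j ≠ 0 := by omega
    have h2 : i - j ≠ 0 := by omega
    simp [h1, h2, hij]
    intro h3 h4
    exact absurd (h3.trans h4.symm) hij

/-- Chebyshev interpolation stability: if a polynomial of degree at most `d` is
bounded by `ε` at the Chebyshev nodes `cos(π(k+1/2)/(d+1))`, then it is bounded by
`√2(d+1)ε` on all of `[-1,1]`. -/
theorem stmt_4 (d : ℕ) (f : Polynomial ℝ) (hdeg : f.natDegree ≤ d) (ε : ℝ)
    (h : ∀ k ≤ d, |f.eval (Real.cos (Real.pi * ((k : ℝ) + 1 / 2) / ((d : ℝ) + 1)))| ≤ ε) :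
    ∀ x ∈ Set.Icc (-1 : ℝ) 1, |f.eval x| ≤ Real.sqrt 2 * ((d : ℝ) + 1) * ε := by
  intro x hx
  obtain ⟨b, hb⟩ := cheb_span d f hdeg
  have hε0 : 0 ≤ ε := le_trans (abs_nonneg _) (h 0 (Nat.zero_le d))
  have heval : ∀ θ : ℝ, f.eval (Real.cos θ)
      = ∑ i ∈ Finset.range (d+1), b i * Real.cos ((i:ℝ)*θ) := by
    intro θ
    rw [hb, Polynomial.eval_finset_sum]
    refine Finset.sum_congr rfl fun i _ => ?_
    rw [Polynomial.eval_mul, Polynomial.eval_C, Polynomial.Chebyshev.T_real_cos]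
    push_cast
    ring
  set θ : ℕ → ℝ := fun k => Real.pi * ((k:ℝ) + 1/2) / ((d:ℝ)+1) with hθ
  set w : ℕ → ℝ := fun i => if i = 0 then 1 else 1/2 with hw
  have parseval : ∑ k ∈ Finset.range (d+1),
      (∑ i ∈ Finset.range (d+1), b i * Real.cos ((i:ℝ)*(θ k)))^2
      = ((d:ℝ)+1) * ∑ i ∈ Finset.range (d+1), w i * (b i)^2 := by
    have e1 : ∀ k ∈ Finset.range (d+1),
        (∑ i ∈ Finset.range (d+1), b i * Real.cos ((i:ℝ)*(θ k)))^2
        = ∑ i ∈ Finset.range (d+1), ∑ j ∈ Finset.range (d+1),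
            (b i * b j) * (Real.cos ((i:ℝ)*(θ k)) * Real.cos ((j:ℝ)*(θ k))) := by
      intro k _
      rw [sq, Finset.sum_mul_sum]
      exact Finset.sum_congr rfl fun i _ => Finset.sum_congr rfl fun j _ => by ring
    rw [Finset.sum_congr rfl e1, Finset.sum_comm]
    have e2 : ∀ i ∈ Finset.range (d+1),
        ∑ k ∈ Finset.range (d+1), ∑ j ∈ Finset.range (d+1),
          (b i * b j) * (Real.cos ((i:ℝ)*(θ k)) * Real.cos ((j:ℝ)*(θ k)))
        = ((d:ℝ)+1) * (w i * (b i)^2) := by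
      intro i hi
      have hi' : i ≤ d := by simp at hi; omega
      rw [Finset.sum_comm]
      have e3 : ∀ j ∈ Finset.range (d+1),
          ∑ k ∈ Finset.range (d+1),
            (b i * b j) * (Real.cos ((i:ℝ)*(θ k)) * Real.cos ((j:ℝ)*(θ k)))
          = if i = j then (b i * b j) * (if i = 0 then (d:ℝ)+1 else ((d:ℝ)+1)/2) else 0 := by
        intro j hj
        have hj' : j ≤ d := by simp at hj; omega
        rw [← Finset.mul_sum, hθ]
        simp only []
        rw [cheb_orth d i j hi' hj']
        split_ifs <;> simp
      rw [Finset.sum_congr rfl e3, Finset.sum_ite_eq (Finset.range (d+1)) i]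
      rw [if_pos hi, hw]
      by_cases h0 : i = 0 <;> simp only [h0, if_true, if_false, ite_true, ite_false] <;> ring_nf <;> simp [h0] <;> ring
    rw [Finset.sum_congr rfl e2, ← Finset.mul_sum]
  have hub : ∑ i ∈ Finset.range (d+1), w i * (b i)^2 ≤ ε^2 := by
    have hk : ∀ k ∈ Finset.range (d+1),
        (∑ i ∈ Finset.range (d+1), b i * Real.cos ((i:ℝ)*(θ k)))^2 ≤ ε^2 := by
      intro k hk
      have hkd : k ≤ d := by simp at hk; omega
      have hh := h k hkd
      rw [heval (θ k)] at *
      calc (∑ i ∈ Finset.range (d+1), b i * Real.cos ((i:ℝ)*(θ k)))^2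
          = |∑ i ∈ Finset.range (d+1), b i * Real.cos ((i:ℝ)*(θ k))|^2 := (sq_abs _).symm
        _ ≤ ε^2 := by
            apply pow_le_pow_left₀ (abs_nonneg _) _ 2
            exact hh
    have hsum : ∑ k ∈ Finset.range (d+1),
        (∑ i ∈ Finset.range (d+1), b i * Real.cos ((i:ℝ)*(θ k)))^2 ≤ ((d:ℝ)+1) * ε^2 := by
      calc _ ≤ ∑ _k ∈ Finset.range (d+1), ε^2 := Finset.sum_le_sum hk
        _ = ((d:ℝ)+1) * ε^2 := by
            rw [Finset.sum_const, Finset.card_range, nsmul_eq_mul]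
            push_cast; ring
    rw [parseval] at hsum
    have hd1 : (0:ℝ) < (d:ℝ)+1 := by positivity
    exact le_of_mul_le_mul_left hsum hd1
  have hCS : ∑ i ∈ Finset.range (d+1), |b i|
      ≤ Real.sqrt (2*(d:ℝ)+1) * Real.sqrt (∑ i ∈ Finset.range (d+1), w i * (b i)^2) := by
    have hcs := Real.sum_mul_le_sqrt_mul_sqrt (Finset.range (d+1))
      (fun i => if i = 0 then 1 else Real.sqrt 2)
      (fun i => if i = 0 then |b 0| else |b i| / Real.sqrt 2)
    have s2 : Real.sqrt 2 ≠ 0 := by positivity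
    have efg : ∀ i ∈ Finset.range (d+1),
        (if i = 0 then (1:ℝ) else Real.sqrt 2) * (if i = 0 then |b 0| else |b i| / Real.sqrt 2)
        = |b i| := by
      intro i _
      rcases eq_or_ne i 0 with rfl | h0
      · simp
      · rw [if_neg h0, if_neg h0]
        field_simp
    have ef2 : ∑ i ∈ Finset.range (d+1), (if i = 0 then (1:ℝ) else Real.sqrt 2)^2
        = 2*(d:ℝ)+1 := by
      have : ∀ i ∈ Finset.range (d+1), (if i = 0 then (1:ℝ) else Real.sqrt 2)^2
          = 2 - (if i = 0 then (1:ℝ) else 0) := by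
        intro i _
        rcases eq_or_ne i 0 with rfl | h0
        · norm_num
        · rw [if_neg h0, if_neg h0, Real.sq_sqrt (by norm_num : (2:ℝ) ≥ 0)]
          ring
      rw [Finset.sum_congr rfl this, Finset.sum_sub_distrib, Finset.sum_const,
        Finset.card_range, Finset.sum_ite_eq' (Finset.range (d+1)) 0 (fun _ => (1:ℝ)),
        if_pos (by simp)]
      push_cast; ring
    have eg2 : ∀ i ∈ Finset.range (d+1),
        (if i = 0 then |b 0| else |b i| / Real.sqrt 2)^2 = w i * (b i)^2 := by
      intro i _
      rcases eq_or_ne i 0 with rfl | h0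
      · simp [hw, sq_abs]
      · rw [if_neg h0, hw]
        simp only [if_neg h0]
        rw [div_pow, sq_abs, Real.sq_sqrt (by norm_num : (2:ℝ) ≥ 0)]
        ring
    calc ∑ i ∈ Finset.range (d+1), |b i|
        = ∑ i ∈ Finset.range (d+1),
            (if i = 0 then (1:ℝ) else Real.sqrt 2) * (if i = 0 then |b 0| else |b i| / Real.sqrt 2) :=
          (Finset.sum_congr rfl efg).symm
      _ ≤ _ := hcs
      _ = Real.sqrt (2*(d:ℝ)+1) * Real.sqrt (∑ i ∈ Finset.range (d+1), w i * (b i)^2) := by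
          rw [ef2, Finset.sum_congr rfl eg2]
  -- final chain
  have hx1 : Real.cos (Real.arccos x) = x := Real.cos_arccos hx.1 hx.2
  have hbound : |f.eval x| ≤ ∑ i ∈ Finset.range (d+1), |b i| := by
    rw [← hx1, heval]
    refine le_trans (Finset.abs_sum_le_sum_abs _ _) (Finset.sum_le_sum fun i _ => ?_)
    rw [abs_mul]
    calc |b i| * |Real.cos ((i:ℝ) * Real.arccos x)| ≤ |b i| * 1 :=
        mul_le_mul_of_nonneg_left (Real.abs_cos_le_one _) (abs_nonneg _)
      _ = |b i| := mul_one _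
  have hsq : Real.sqrt (∑ i ∈ Finset.range (d+1), w i * (b i)^2) ≤ ε := by
    calc Real.sqrt (∑ i ∈ Finset.range (d+1), w i * (b i)^2)
        ≤ Real.sqrt (ε^2) := Real.sqrt_le_sqrt hub
      _ = ε := Real.sqrt_sq hε0
  have hfin : Real.sqrt (2*(d:ℝ)+1) ≤ Real.sqrt 2 * ((d:ℝ)+1) := by
    have : (2*(d:ℝ)+1) ≤ 2 * ((d:ℝ)+1)^2 := by nlinarith [Nat.cast_nonneg (α := ℝ) d]
    calc Real.sqrt (2*(d:ℝ)+1) ≤ Real.sqrt (2 * ((d:ℝ)+1)^2) := Real.sqrt_le_sqrt this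
      _ = Real.sqrt 2 * ((d:ℝ)+1) := by
          rw [Real.sqrt_mul (by norm_num) , Real.sqrt_sq (by positivity)]
  calc |f.eval x| ≤ ∑ i ∈ Finset.range (d+1), |b i| := hbound
    _ ≤ Real.sqrt (2*(d:ℝ)+1) * Real.sqrt (∑ i ∈ Finset.range (d+1), w i * (b i)^2) := hCS
    _ ≤ (Real.sqrt 2 * ((d:ℝ)+1)) * ε := by
        apply mul_le_mul hfin hsq (Real.sqrt_nonneg _) (by positivity)
    _ = Real.sqrt 2 * ((d:ℝ)+1) * ε := by ring
end

section
/- Let f be a univariate polynomial of degree at most d, m > 0, and let c_k = m·cos(π(k+1/2)/(d+1)) for k ∈ {0,...,d} be the Chebyshev nodes scaled to [-m,m]. If |f(c_k)| ≤ ε for every k, then |f(x)| ≤ √2 · (d+1) · ε for every x ∈ [-m,m]. -/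
open Real Finset

lemma sum_cos_eq_zero (n : ℕ) (hn : 0 < n) (x : ℝ)
    (h1 : Real.sin (x * π / (2 * n)) ≠ 0) (h2 : Real.sin (x * π) = 0) :
    ∑ k ∈ Finset.range n, Real.cos (x * (π * ((k : ℝ) + 1 / 2) / n)) = 0 := by
  have hn' : (n : ℝ) ≠ 0 := Nat.cast_ne_zero.mpr hn.ne'
  set α := x * π / (2 * n) with hα
  have key : ∀ k : ℕ, 2 * Real.sin α * Real.cos (x * (π * ((k : ℝ) + 1 / 2) / n))
      = Real.sin (x * π * ((k : ℝ) + 1) / n) - Real.sin (x * π * (k : ℝ) / n) := by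
    intro k
    have e1 : x * π * ((k : ℝ) + 1) / n = x * (π * ((k : ℝ) + 1 / 2) / n) + α := by
      rw [hα]; field_simp; ring
    have e2 : x * π * (k : ℝ) / n = x * (π * ((k : ℝ) + 1 / 2) / n) - α := by
      rw [hα]; field_simp; ring
    rw [e1, e2, Real.sin_add, Real.sin_sub]; ring
  have tel : 2 * Real.sin α * ∑ k ∈ Finset.range n, Real.cos (x * (π * ((k : ℝ) + 1 / 2) / n))
      = Real.sin (x * π * (n : ℝ) / n) - Real.sin (x * π * (0 : ℕ) / n) := by
    rw [Finset.mul_sum]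
    rw [show (fun k : ℕ => 2 * Real.sin α * Real.cos (x * (π * ((k : ℝ) + 1 / 2) / n)))
      = fun k : ℕ => Real.sin (x * π * ((k : ℝ) + 1) / n) - Real.sin (x * π * (k : ℝ) / n)
      from funext key]
    have := Finset.sum_range_sub (fun k : ℕ => Real.sin (x * π * (k : ℝ) / n)) n
    simpa using this
  have hz : Real.sin (x * π * (n : ℝ) / n) - Real.sin (x * π * (0 : ℕ) / n) = 0 := by
    rw [mul_div_assoc, div_self hn', mul_one]
    simp [h2]
  rw [hz] at tel
  rcases mul_eq_zero.mp tel with h' | h'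
  · exact absurd (by rcases mul_eq_zero.mp h' with h'' | h'' <;> [norm_num at h''; exact h'']) h1
  · exact h'

-- helper: sin (x*π/(2n)) ≠ 0 when 0 < |x| and |x| < 2n
lemma sin_ne_zero_aux (n : ℕ) (hn : 0 < n) (x : ℝ) (hx0 : x ≠ 0) (hx : |x| < 2 * n) :
    Real.sin (x * π / (2 * n)) ≠ 0 := by
  have h2n : (0 : ℝ) < 2 * n := by positivity
  have hlt : x * π / (2 * n) < π := by
    rw [div_lt_iff₀ h2n]
    calc x * π ≤ |x| * π := by
          have := le_abs_self x
          nlinarith [Real.pi_pos]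
      _ < π * (2 * n) := by nlinarith [Real.pi_pos, abs_nonneg x]
  have hgt : -π < x * π / (2 * n) := by
    rw [lt_div_iff₀ h2n]
    calc -π * (2 * n) < -(|x| * π) := by nlinarith [Real.pi_pos, abs_nonneg x]
      _ ≤ x * π := by
          have := neg_abs_le x
          nlinarith [Real.pi_pos]
  intro hs
  rw [Real.sin_eq_zero_iff_of_lt_of_lt hgt hlt] at hs
  apply hx0
  field_simp [Real.pi_ne_zero] at hs
  simpa [Real.pi_ne_zero] using hs

lemma orth (n : ℕ) (hn : 0 < n) (i j : ℕ) (hi : i < n) (hj : j < n) :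
    ∑ k ∈ Finset.range n,
      Real.cos ((i : ℝ) * (π * ((k : ℝ) + 1 / 2) / n)) *
        Real.cos ((j : ℝ) * (π * ((k : ℝ) + 1 / 2) / n))
    = if i = j then (if i = 0 then (n : ℝ) else (n : ℝ) / 2) else 0 := by
  have hpt : ∀ t : ℝ, Real.cos ((i : ℝ) * t) * Real.cos ((j : ℝ) * t)
      = (Real.cos (((i : ℝ) + (j : ℝ)) * t) + Real.cos (((i : ℝ) - (j : ℝ)) * t)) / 2 := by
    intro t
    rw [add_mul, sub_mul, Real.cos_add, Real.cos_sub]; ring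
  have hsplit : ∑ k ∈ Finset.range n,
      Real.cos ((i : ℝ) * (π * ((k : ℝ) + 1 / 2) / n)) *
        Real.cos ((j : ℝ) * (π * ((k : ℝ) + 1 / 2) / n))
      = ((∑ k ∈ Finset.range n, Real.cos (((i : ℝ) + (j : ℝ)) * (π * ((k : ℝ) + 1 / 2) / n)))
        + ∑ k ∈ Finset.range n, Real.cos (((i : ℝ) - (j : ℝ)) * (π * ((k : ℝ) + 1 / 2) / n))) / 2 := by
    rw [← Finset.sum_add_distrib, Finset.sum_div]
    exact Finset.sum_congr rfl fun k _ => hpt _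
  rw [hsplit]
  have hsin_nat : ∀ r : ℕ, Real.sin ((r : ℝ) * π) = 0 := fun r => Real.sin_nat_mul_pi r
  by_cases hij : i = j
  · subst hij
    have hsum2 : ∑ k ∈ Finset.range n, Real.cos (((i : ℝ) - (i : ℝ)) * (π * ((k : ℝ) + 1 / 2) / n))
        = (n : ℝ) := by simp
    rw [hsum2]
    by_cases hi0 : i = 0
    · subst hi0
      simp
    · have hx0 : ((i : ℝ) + (i : ℝ)) ≠ 0 := by
        have : (0:ℝ) < (i:ℝ) := by exact_mod_cast Nat.pos_of_ne_zero hi0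
        positivity
      have hxlt : |(i : ℝ) + (i : ℝ)| < 2 * n := by
        rw [abs_of_pos (by positivity : (0:ℝ) < (i:ℝ)+(i:ℝ) )]
        have : (i : ℝ) < n := by exact_mod_cast hi
        linarith
      have hs2 : Real.sin (((i : ℝ) + (i : ℝ)) * π) = 0 := by
        have := hsin_nat (i + i)
        push_cast at this
        convert this using 2
      have := sum_cos_eq_zero n hn ((i : ℝ) + (i : ℝ))
        (sin_ne_zero_aux n hn _ hx0 hxlt) hs2
      rw [this]
      simp [hi0]
  · have hine : (i : ℝ) ≠ (j : ℝ) := by exact_mod_cast hij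
    have h1 : ∑ k ∈ Finset.range n, Real.cos (((i : ℝ) + (j : ℝ)) * (π * ((k : ℝ) + 1 / 2) / n)) = 0 := by
      apply sum_cos_eq_zero n hn
      · apply sin_ne_zero_aux n hn
        · intro hc
          have hi0 : (i:ℝ) = 0 ∧ (j:ℝ) = 0 := by
            constructor <;> nlinarith [Nat.cast_nonneg (α := ℝ) i, Nat.cast_nonneg (α := ℝ) j]
          exact hine (by rw [hi0.1, hi0.2])
        · rw [abs_of_nonneg (by positivity)]
          have h1 : (i : ℝ) < n := by exact_mod_cast hi
          have h2 : (j : ℝ) < n := by exact_mod_cast hj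
          linarith
      · have := hsin_nat (i + j)
        push_cast at this
        convert this using 2
    have h2 : ∑ k ∈ Finset.range n, Real.cos (((i : ℝ) - (j : ℝ)) * (π * ((k : ℝ) + 1 / 2) / n)) = 0 := by
      apply sum_cos_eq_zero n hn
      · apply sin_ne_zero_aux n hn _ (sub_ne_zero.mpr hine)
        rw [abs_sub_lt_iff]
        have h1 : (i : ℝ) < n := by exact_mod_cast hi
        have h2 : (j : ℝ) < n := by exact_mod_cast hj
        constructor <;> nlinarith [Nat.cast_nonneg (α := ℝ) i, Nat.cast_nonneg (α := ℝ) j]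
      · rcases le_or_gt j i with hle | hlt
        · have := hsin_nat (i - j)
          push_cast [hle] at this
          convert this using 2
        · have := hsin_nat (j - i)
          have h' : Real.sin (((j:ℝ) - (i:ℝ)) * π) = 0 := by
            push_cast [hlt.le] at this
            convert this using 2
          have : ((i:ℝ) - (j:ℝ)) * π = -(((j:ℝ) - (i:ℝ)) * π) := by ring
          rw [this, Real.sin_neg, h', neg_zero]
    rw [h1, h2]
    simp [hij]

lemma workhorse (n : ℕ) (hn : 0 < n) (u v : ℕ → ℝ) :
    ∑ k ∈ Finset.range n,
      (∑ i ∈ Finset.range n, u i * Real.cos ((i : ℝ) * (π * ((k : ℝ) + 1 / 2) / n))) *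
      (∑ j ∈ Finset.range n, v j * Real.cos ((j : ℝ) * (π * ((k : ℝ) + 1 / 2) / n)))
    = ∑ j ∈ Finset.range n, u j * v j * (if j = 0 then (n : ℝ) else (n : ℝ) / 2) := by
  have step1 : ∀ k : ℕ,
      (∑ i ∈ Finset.range n, u i * Real.cos ((i : ℝ) * (π * ((k : ℝ) + 1 / 2) / n))) *
      (∑ j ∈ Finset.range n, v j * Real.cos ((j : ℝ) * (π * ((k : ℝ) + 1 / 2) / n)))
      = ∑ i ∈ Finset.range n, ∑ j ∈ Finset.range n,
          u i * v j * (Real.cos ((i : ℝ) * (π * ((k : ℝ) + 1 / 2) / n)) *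
            Real.cos ((j : ℝ) * (π * ((k : ℝ) + 1 / 2) / n))) := by
    intro k
    rw [Finset.sum_mul_sum]
    exact Finset.sum_congr rfl fun i _ => Finset.sum_congr rfl fun j _ => by ring
  calc ∑ k ∈ Finset.range n,
      (∑ i ∈ Finset.range n, u i * Real.cos ((i : ℝ) * (π * ((k : ℝ) + 1 / 2) / n))) *
      (∑ j ∈ Finset.range n, v j * Real.cos ((j : ℝ) * (π * ((k : ℝ) + 1 / 2) / n)))
      = ∑ k ∈ Finset.range n, ∑ i ∈ Finset.range n, ∑ j ∈ Finset.range n,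
          u i * v j * (Real.cos ((i : ℝ) * (π * ((k : ℝ) + 1 / 2) / n)) *
            Real.cos ((j : ℝ) * (π * ((k : ℝ) + 1 / 2) / n))) :=
        Finset.sum_congr rfl fun k _ => step1 k
    _ = ∑ i ∈ Finset.range n, ∑ j ∈ Finset.range n, ∑ k ∈ Finset.range n,
          u i * v j * (Real.cos ((i : ℝ) * (π * ((k : ℝ) + 1 / 2) / n)) *
            Real.cos ((j : ℝ) * (π * ((k : ℝ) + 1 / 2) / n))) := by
        rw [Finset.sum_comm]
        exact Finset.sum_congr rfl fun i _ => Finset.sum_comm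
    _ = ∑ i ∈ Finset.range n, ∑ j ∈ Finset.range n,
          u i * v j * (if i = j then (if i = 0 then (n : ℝ) else (n : ℝ) / 2) else 0) := by
        refine Finset.sum_congr rfl fun i hi => Finset.sum_congr rfl fun j hj => ?_
        rw [← Finset.mul_sum, orth n hn i j (Finset.mem_range.mp hi) (Finset.mem_range.mp hj)]
    _ = ∑ j ∈ Finset.range n, u j * v j * (if j = 0 then (n : ℝ) else (n : ℝ) / 2) := by
        have : ∀ i ∈ Finset.range n, ∑ j ∈ Finset.range n,
            u i * v j * (if i = j then (if i = 0 then (n : ℝ) else (n : ℝ) / 2) else 0)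
            = if i ∈ Finset.range n then u i * v i * (if i = 0 then (n : ℝ) else (n : ℝ) / 2) else 0 := by
          intro i _
          rw [← Finset.sum_ite_eq (Finset.range n) i
            (fun j => u i * v j * (if i = 0 then (n : ℝ) else (n : ℝ) / 2))]
          refine Finset.sum_congr rfl fun j _ => ?_
          by_cases hij : i = j <;> simp [hij]
        rw [Finset.sum_congr rfl this]
        exact Finset.sum_congr rfl fun i hi => by simp [hi]

lemma cos_pow_expand (i : ℕ) : ∃ b : ℕ → ℝ, ∀ θ : ℝ,
    Real.cos θ ^ i = ∑ j ∈ Finset.range (i + 1), b j * Real.cos ((j : ℝ) * θ) := by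
  induction i with
  | zero => exact ⟨fun j => if j = 0 then 1 else 0, fun θ => by simp⟩
  | succ i ih =>
    obtain ⟨b, hb⟩ := ih
    refine ⟨fun j => (if j = 0 then 0 else b (j - 1) / 2)
      + (if j < i then b (j + 1) / 2 else 0)
      + (if j = 1 then b 0 / 2 else 0), fun θ => ?_⟩
    have hprod : ∀ j : ℕ, Real.cos ((j : ℝ) * θ) * Real.cos θ
        = (Real.cos (((j : ℕ) + 1 : ℕ) * θ) + Real.cos (((j : ℝ) - 1) * θ)) / 2 := by
      intro j
      push_cast
      rw [add_mul, sub_mul, Real.cos_add, Real.cos_sub, one_mul]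
      ring
    have key : Real.cos θ ^ (i + 1)
        = ∑ j ∈ Finset.range (i + 1), b j *
            ((Real.cos (((j + 1 : ℕ)) * θ) + Real.cos (((j : ℝ) - 1) * θ)) / 2) := by
      rw [pow_succ, hb θ, Finset.sum_mul]
      refine Finset.sum_congr rfl fun j _ => ?_
      rw [mul_assoc, hprod j]
    rw [key]
    have split : ∑ j ∈ Finset.range (i + 1), b j *
            ((Real.cos (((j + 1 : ℕ)) * θ) + Real.cos (((j : ℝ) - 1) * θ)) / 2)
        = (∑ j ∈ Finset.range (i + 1), b j / 2 * Real.cos (((j + 1 : ℕ)) * θ))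
          + ∑ j ∈ Finset.range (i + 1), b j / 2 * Real.cos (((j : ℝ) - 1) * θ) := by
      rw [← Finset.sum_add_distrib]
      exact Finset.sum_congr rfl fun j _ => by ring
    rw [split]
    -- first sum: shift index up
    have s1 : ∑ j ∈ Finset.range (i + 1), b j / 2 * Real.cos (((j + 1 : ℕ)) * θ)
        = ∑ j ∈ Finset.range (i + 2), (if j = 0 then 0 else b (j - 1) / 2) * Real.cos ((j : ℝ) * θ) := by
      rw [Finset.sum_range_succ' (fun j => (if j = 0 then 0 else b (j - 1) / 2) * Real.cos ((j : ℝ) * θ)) (i + 1)]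
      simp
    -- second sum: split off j = 0, shift rest down
    have s2 : ∑ j ∈ Finset.range (i + 1), b j / 2 * Real.cos (((j : ℝ) - 1) * θ)
        = (∑ j ∈ Finset.range i, b (j + 1) / 2 * Real.cos ((j : ℝ) * θ)) + b 0 / 2 * Real.cos θ := by
      rw [Finset.sum_range_succ' (fun j => b j / 2 * Real.cos (((j : ℝ) - 1) * θ)) i]
      congr 1
      · refine Finset.sum_congr rfl fun j _ => ?_
        push_cast
        ring_nf
      · norm_num
    rw [s1, s2]
    have s2' : ∑ j ∈ Finset.range i, b (j + 1) / 2 * Real.cos ((j : ℝ) * θ)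
        = ∑ j ∈ Finset.range (i + 2), (if j < i then b (j + 1) / 2 else 0) * Real.cos ((j : ℝ) * θ) := by
      have e1 : ∑ j ∈ Finset.range i, b (j + 1) / 2 * Real.cos ((j : ℝ) * θ)
          = ∑ j ∈ Finset.range i, (if j < i then b (j + 1) / 2 else 0) * Real.cos ((j : ℝ) * θ) :=
        Finset.sum_congr rfl fun j hj => by simp [Finset.mem_range.mp hj]
      rw [e1]
      exact Finset.sum_subset (Finset.range_subset_range.mpr (by omega : i ≤ i + 2))
        (fun j _ hj => by
          have hni : ¬ j < i := fun hc => hj (Finset.mem_range.mpr hc)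
          simp [hni])
    have s3 : b 0 / 2 * Real.cos θ
        = ∑ j ∈ Finset.range (i + 2), (if j = 1 then b 0 / 2 else 0) * Real.cos ((j : ℝ) * θ) := by
      rw [Finset.sum_eq_single 1]
      · simp
      · intro j _ hj; simp [hj]
      · intro hmem; exact absurd (Finset.mem_range.mpr (by omega)) hmem
    rw [s2', s3, ← Finset.sum_add_distrib, ← Finset.sum_add_distrib]
    exact Finset.sum_congr rfl fun j _ => by ring

lemma poly_expand (f : Polynomial ℝ) (c : ℝ) (N : ℕ) (hN : f.natDegree < N) :
    ∃ b : ℕ → ℝ, ∀ θ : ℝ,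
      f.eval (c * Real.cos θ) = ∑ j ∈ Finset.range N, b j * Real.cos ((j : ℝ) * θ) := by
  choose b hb using cos_pow_expand
  refine ⟨fun j => ∑ i ∈ Finset.range (f.natDegree + 1),
    f.coeff i * c ^ i * (if j < i + 1 then b i j else 0), fun θ => ?_⟩
  calc f.eval (c * Real.cos θ)
      = ∑ i ∈ Finset.range (f.natDegree + 1), f.coeff i * (c * Real.cos θ) ^ i :=
        Polynomial.eval_eq_sum_range _
    _ = ∑ i ∈ Finset.range (f.natDegree + 1), ∑ j ∈ Finset.range N,
          (f.coeff i * c ^ i * (if j < i + 1 then b i j else 0)) * Real.cos ((j : ℝ) * θ) := by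
        refine Finset.sum_congr rfl fun i hi => ?_
        have hiN : i + 1 ≤ N := by
          have := Finset.mem_range.mp hi; omega
        have e1 : f.coeff i * (c * Real.cos θ) ^ i
            = ∑ j ∈ Finset.range (i + 1), (f.coeff i * c ^ i * b i j) * Real.cos ((j : ℝ) * θ) := by
          rw [mul_pow, hb i θ, Finset.mul_sum, Finset.mul_sum]
          exact Finset.sum_congr rfl fun j _ => by ring
        rw [e1]
        have e2 : ∑ j ∈ Finset.range (i + 1), (f.coeff i * c ^ i * b i j) * Real.cos ((j : ℝ) * θ)
            = ∑ j ∈ Finset.range (i + 1),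
                (f.coeff i * c ^ i * (if j < i + 1 then b i j else 0)) * Real.cos ((j : ℝ) * θ) :=
          Finset.sum_congr rfl fun j hj => by simp [Finset.mem_range.mp hj]
        rw [e2]
        exact Finset.sum_subset (Finset.range_subset_range.mpr hiN)
          (fun j _ hj => by
            have : ¬ j < i + 1 := fun hc => hj (Finset.mem_range.mpr hc)
            simp [this])
    _ = ∑ j ∈ Finset.range N, (∑ i ∈ Finset.range (f.natDegree + 1),
          f.coeff i * c ^ i * (if j < i + 1 then b i j else 0)) * Real.cos ((j : ℝ) * θ) := by
        rw [Finset.sum_comm]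
        exact Finset.sum_congr rfl fun j _ => (Finset.sum_mul _ _ _).symm

/-- Scaled Chebyshev interpolation stability: if a polynomial of degree at most `d`
is bounded by `ε` at the scaled Chebyshev nodes `m·cos(π(k+1/2)/(d+1))`, then it is
bounded by `√2(d+1)ε` on `[-m,m]`. -/
theorem stmt_5 (d : ℕ) (m : ℝ) (hm : 0 < m) (f : Polynomial ℝ) (hdeg : f.natDegree ≤ d)
    (ε : ℝ)
    (h : ∀ k ≤ d, |f.eval (m * Real.cos (Real.pi * ((k : ℝ) + 1 / 2) / ((d : ℝ) + 1)))| ≤ ε) :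
    ∀ x ∈ Set.Icc (-m) m, |f.eval x| ≤ Real.sqrt 2 * ((d : ℝ) + 1) * ε := by
  intro x hx
  set n : ℕ := d + 1 with hn_def
  have hn : 0 < n := Nat.succ_pos d
  have hnR : ((n : ℕ) : ℝ) = (d : ℝ) + 1 := by simp [hn_def]
  have hnR0 : (0 : ℝ) < (n : ℝ) := by exact_mod_cast hn
  have hε : 0 ≤ ε := le_trans (abs_nonneg _) (h 0 (Nat.zero_le d))
  -- x = m * cos φ
  have hx1 : -1 ≤ x / m := by rw [le_div_iff₀ hm]; linarith [hx.1]
  have hx2 : x / m ≤ 1 := by rw [div_le_iff₀ hm]; linarith [hx.2]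
  set φ := Real.arccos (x / m) with hφ
  have hxφ : x = m * Real.cos φ := by
    rw [hφ, Real.cos_arccos hx1 hx2]; field_simp
  obtain ⟨b, hb⟩ := poly_expand f m n (by omega)
  -- weights
  set v : ℕ → ℝ := fun j =>
    (if j = 0 then 1 / (n : ℝ) else 2 / (n : ℝ)) * Real.cos ((j : ℝ) * φ) with hv
  set g : ℕ → ℝ := fun k => f.eval (m * Real.cos (π * ((k : ℝ) + 1 / 2) / (n : ℝ))) with hg
  set L : ℕ → ℝ := fun k =>
    ∑ j ∈ Finset.range n, v j * Real.cos ((j : ℝ) * (π * ((k : ℝ) + 1 / 2) / n)) with hL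
  -- Claim 1 : f.eval x = ∑ g k * L k
  have claim1 : f.eval x = ∑ k ∈ Finset.range n, g k * L k := by
    have e0 : ∀ k : ℕ, g k
        = ∑ i ∈ Finset.range n, b i * Real.cos ((i : ℝ) * (π * ((k : ℝ) + 1 / 2) / n)) := by
      intro k; rw [hg]; exact hb _
    have e1 : ∑ k ∈ Finset.range n, g k * L k
        = ∑ j ∈ Finset.range n, b j * v j * (if j = 0 then (n : ℝ) else (n : ℝ) / 2) := by
      rw [← workhorse n hn b v]
      exact Finset.sum_congr rfl fun k _ => by rw [e0 k]
    rw [e1]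
    have e2 : ∀ j ∈ Finset.range n,
        b j * v j * (if j = 0 then (n : ℝ) else (n : ℝ) / 2)
        = b j * Real.cos ((j : ℝ) * φ) := by
      intro j _
      rcases eq_or_ne j 0 with hj | hj
      · subst hj
        simp only [hv, reduceIte, Nat.cast_zero, zero_mul, Real.cos_zero, mul_one]
        field_simp
      · simp only [hv, if_neg hj]
        field_simp
    rw [Finset.sum_congr rfl e2, ← hb φ, ← hxφ]
  -- Claim 2 : ∑ L k ^ 2 ≤ 2
  have claim2 : ∑ k ∈ Finset.range n, L k ^ 2 ≤ 2 := by
    have e1 : ∑ k ∈ Finset.range n, L k ^ 2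
        = ∑ j ∈ Finset.range n, v j * v j * (if j = 0 then (n : ℝ) else (n : ℝ) / 2) := by
      rw [← workhorse n hn v v]
      exact Finset.sum_congr rfl fun k _ => (sq (L k)) ▸ by rw [hL]
    rw [e1]
    have e2 : ∀ j ∈ Finset.range n,
        v j * v j * (if j = 0 then (n : ℝ) else (n : ℝ) / 2) ≤ 2 / n := by
      intro j _
      have hc2 : Real.cos ((j : ℝ) * φ) ^ 2 ≤ 1 := Real.cos_sq_le_one _
      rcases eq_or_ne j 0 with hj | hj
      · subst hj
        have e : v 0 * v 0 * (if (0:ℕ) = 0 then (n:ℝ) else (n:ℝ)/2) = 1 / (n:ℝ) := by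
          simp only [hv, reduceIte, Nat.cast_zero, zero_mul, Real.cos_zero, mul_one]
          field_simp
        rw [e, div_le_div_iff₀ hnR0 hnR0]
        nlinarith
      · have e : v j * v j * (if j = 0 then (n:ℝ) else (n:ℝ)/2)
            = (2 / (n:ℝ)) * Real.cos ((j : ℝ) * φ) ^ 2 := by
          simp only [hv, if_neg hj]
          field_simp
        rw [e]
        calc (2 / (n:ℝ)) * Real.cos ((j : ℝ) * φ) ^ 2 ≤ (2 / (n:ℝ)) * 1 := by
              apply mul_le_mul_of_nonneg_left hc2 (by positivity)
          _ = 2 / (n:ℝ) := mul_one _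
    calc ∑ j ∈ Finset.range n, v j * v j * (if j = 0 then (n : ℝ) else (n : ℝ) / 2)
        ≤ ∑ j ∈ Finset.range n, (2 / (n : ℝ)) := Finset.sum_le_sum e2
      _ = 2 := by rw [Finset.sum_const, Finset.card_range, nsmul_eq_mul]; field_simp
  -- Claim 3 : Cauchy-Schwarz
  have hg_bound : ∀ k ∈ Finset.range n, g k ^ 2 ≤ ε ^ 2 := by
    intro k hk
    have hkd : k ≤ d := by have := Finset.mem_range.mp hk; omega
    have := h k hkd
    rw [hg]
    have habs : |g k| ≤ ε := by rw [hg]; simp only []; rw [hnR]; exact this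
    nlinarith [abs_nonneg (g k), sq_abs (g k), habs]
  have hsum_g : ∑ k ∈ Finset.range n, g k ^ 2 ≤ (n : ℝ) * ε ^ 2 := by
    calc ∑ k ∈ Finset.range n, g k ^ 2 ≤ ∑ k ∈ Finset.range n, ε ^ 2 :=
          Finset.sum_le_sum hg_bound
      _ = (n : ℝ) * ε ^ 2 := by rw [Finset.sum_const, Finset.card_range]; simp [mul_comm]
  have cs := Finset.sum_mul_sq_le_sq_mul_sq (Finset.range n) g L
  have hL2nonneg : (0:ℝ) ≤ ∑ k ∈ Finset.range n, L k ^ 2 :=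
    Finset.sum_nonneg fun k _ => sq_nonneg _
  have hg2nonneg : (0:ℝ) ≤ ∑ k ∈ Finset.range n, g k ^ 2 :=
    Finset.sum_nonneg fun k _ => sq_nonneg _
  have key : (f.eval x) ^ 2 ≤ ((n : ℝ) * ε ^ 2) * 2 := by
    rw [claim1]
    calc (∑ k ∈ Finset.range n, g k * L k) ^ 2
        ≤ (∑ k ∈ Finset.range n, g k ^ 2) * (∑ k ∈ Finset.range n, L k ^ 2) := cs
      _ ≤ ((n : ℝ) * ε ^ 2) * 2 := by
          apply mul_le_mul hsum_g claim2 hL2nonneg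
          positivity
  -- conclude
  have habs : |f.eval x| ≤ Real.sqrt (((n : ℝ) * ε ^ 2) * 2) := by
    rw [← Real.sqrt_sq_eq_abs]
    exact Real.sqrt_le_sqrt key
  have hsimp : Real.sqrt (((n : ℝ) * ε ^ 2) * 2) = Real.sqrt 2 * Real.sqrt (n : ℝ) * ε := by
    rw [show ((n : ℝ) * ε ^ 2) * 2 = (Real.sqrt 2 * Real.sqrt (n:ℝ) * ε) ^ 2 by
      rw [mul_pow, mul_pow, Real.sq_sqrt (by norm_num : (0:ℝ) ≤ 2),
        Real.sq_sqrt (le_of_lt hnR0)]; ring]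
    exact Real.sqrt_sq (by positivity)
  have hsqrtn : Real.sqrt (n : ℝ) ≤ (n : ℝ) := by
    have h1n : (1:ℝ) ≤ (n:ℝ) := by exact_mod_cast hn
    have h2 : Real.sqrt (n:ℝ) ≤ Real.sqrt ((n:ℝ)^2) := Real.sqrt_le_sqrt (by nlinarith)
    rwa [Real.sqrt_sq hnR0.le] at h2
  calc |f.eval x| ≤ Real.sqrt 2 * Real.sqrt (n : ℝ) * ε := by rw [← hsimp]; exact habs
    _ ≤ Real.sqrt 2 * (n : ℝ) * ε := by
        apply mul_le_mul_of_nonneg_right _ hε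
        apply mul_le_mul_of_nonneg_left hsqrtn (Real.sqrt_nonneg 2)
    _ = Real.sqrt 2 * ((d : ℝ) + 1) * ε := by rw [hnR]
end

section
/- For any integer k ≥ n^{8d}, there exists a vector y ∈ {0,...,k}^n such that for any distinct z⁽¹⁾, z⁽²⁾ ∈ {0,...,d}^n each satisfying ∑_j z⁽ⁱ⁾_j ≤ 2d, the inner products ⟨y, z⁽¹⁾⟩ and ⟨y, z⁽²⁾⟩ are distinct. -/
open Finset

lemma sparse_card (n d : ℕ) :
    (((Fintype.piFinset fun _ : Fin n => Finset.range (d+1))).filter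
      fun z => ∑ j, z j ≤ 2*d).card ≤ (n+1)^(2*d) := by
  classical
  have hcard : ((Finset.univ : Finset (Fin (2*d) → Option (Fin n)))).card = (n+1)^(2*d) := by
    rw [Finset.card_univ, Fintype.card_fun, Fintype.card_option, Fintype.card_fin, Fintype.card_fin]
  rw [← hcard]
  apply Finset.card_le_card_of_injOn
    (fun z => fun i : Fin (2*d) =>
      (((Finsupp.equivFunOnFinite.symm z).toMultiset.sort (· ≤ ·))[(i : ℕ)]?))
  · intro z _; exact Finset.mem_univ _
  · intro z₁ hz₁ z₂ hz₂ hfe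
    simp only [Finset.mem_coe, Finset.mem_filter] at hz₁ hz₂
    have hlen : ∀ z : Fin n → ℕ, (∑ j, z j ≤ 2*d) →
        (((Finsupp.equivFunOnFinite.symm z).toMultiset.sort (· ≤ ·))).length ≤ 2*d := by
      intro z hz
      rw [Multiset.length_sort, Finsupp.card_toMultiset]
      rw [Finsupp.sum_fintype _ _ (fun _ => rfl)]
      simpa using hz
    have h1 := hlen z₁ hz₁.2
    have h2 := hlen z₂ hz₂.2
    set l₁ := ((Finsupp.equivFunOnFinite.symm z₁).toMultiset.sort (· ≤ ·)) with hl₁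
    set l₂ := ((Finsupp.equivFunOnFinite.symm z₂).toMultiset.sort (· ≤ ·)) with hl₂
    have hll : l₁ = l₂ := by
      apply List.ext_getElem?
      intro i
      by_cases hi : i < 2*d
      · exact congrFun hfe ⟨i, hi⟩
      · rw [List.getElem?_eq_none (by omega), List.getElem?_eq_none (by omega)]
    have hm : (Finsupp.equivFunOnFinite.symm z₁).toMultiset
        = (Finsupp.equivFunOnFinite.symm z₂).toMultiset := by
      rw [← Multiset.sort_eq (Finsupp.equivFunOnFinite.symm z₁).toMultiset (· ≤ ·),
          ← Multiset.sort_eq (Finsupp.equivFunOnFinite.symm z₂).toMultiset (· ≤ ·),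
          ← hl₁, ← hl₂, hll]
    funext a
    have hc := congrArg (Multiset.count a) hm
    rw [Finsupp.count_toMultiset, Finsupp.count_toMultiset] at hc
    simpa using hc

lemma hyper_card (n k : ℕ) (z₁ z₂ : Fin n → ℕ) (j₀ : Fin n) (hne : z₁ j₀ ≠ z₂ j₀) :
    ((Fintype.piFinset fun _ : Fin n => Finset.range (k+1)).filter
      fun y => ∑ j, y j * z₁ j = ∑ j, y j * z₂ j).card ≤ (k+1)^(n-1) := by
  classical
  have hT : (Fintype.piFinset fun j : Fin n =>
      if j = j₀ then ({0} : Finset ℕ) else Finset.range (k+1)).card = (k+1)^(n-1) := by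
    rw [Fintype.card_piFinset]
    have : ∀ j : Fin n, (if j = j₀ then ({0} : Finset ℕ) else Finset.range (k+1)).card
        = if j = j₀ then 1 else (k+1) := by
      intro j; by_cases h : j = j₀ <;> simp [h]
    rw [Finset.prod_congr rfl (fun j _ => this j)]
    rw [← Finset.mul_prod_erase Finset.univ _ (Finset.mem_univ j₀)]
    rw [if_pos rfl, one_mul]
    rw [Finset.prod_congr rfl (fun j hj => if_neg (Finset.mem_erase.mp hj).1)]
    rw [Finset.prod_const, Finset.card_erase_of_mem (Finset.mem_univ j₀),
      Finset.card_univ, Fintype.card_fin]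
  rw [← hT]
  apply Finset.card_le_card_of_injOn (fun y => Function.update y j₀ 0)
  · intro y hy
    simp only [Finset.mem_coe, Finset.mem_filter, Fintype.mem_piFinset] at hy ⊢
    intro j
    by_cases h : j = j₀
    · subst h; simp [Function.update]
    · simp [Function.update, h, hy.1 j]
  · intro y hy y' hy' hupd
    simp only [Finset.mem_coe, Finset.mem_filter] at hy hy'
    have hoff : ∀ j, j ≠ j₀ → y j = y' j := by
      intro j hj
      have := congrFun hupd j
      simpa [Function.update, hj] using this
    have key : ∀ w : Fin n → ℕ, (∑ j, w j * z₁ j = ∑ j, w j * z₂ j) →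
        ∑ j, (w j : ℤ) * ((z₁ j : ℤ) - z₂ j) = 0 := by
      intro w hw
      have : ∑ j, (w j : ℤ) * ((z₁ j : ℤ) - z₂ j)
          = (∑ j, (w j : ℤ) * z₁ j) - ∑ j, (w j : ℤ) * z₂ j := by
        rw [← Finset.sum_sub_distrib]
        exact Finset.sum_congr rfl fun j _ => by ring
      rw [this]
      have hc : ((∑ j, w j * z₁ j : ℕ) : ℤ) = ((∑ j, w j * z₂ j : ℕ) : ℤ) := by
        exact_mod_cast congrArg (fun t : ℕ => (t : ℤ)) hw
      push_cast at hc
      omega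
    have h1 := key y hy.2
    have h2 := key y' hy'.2
    have hA : ∑ j, ((y j : ℤ) - y' j) * ((z₁ j : ℤ) - z₂ j) = 0 := by
      have : ∑ j, ((y j : ℤ) - y' j) * ((z₁ j : ℤ) - z₂ j)
          = (∑ j, (y j : ℤ) * ((z₁ j : ℤ) - z₂ j))
            - ∑ j, (y' j : ℤ) * ((z₁ j : ℤ) - z₂ j) := by
        rw [← Finset.sum_sub_distrib]
        exact Finset.sum_congr rfl fun j _ => by ring
      rw [this, h1, h2, sub_zero]
    rw [Finset.sum_eq_single j₀ (fun j _ hj => by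
      rw [hoff j hj]; ring) (fun h => absurd (Finset.mem_univ j₀) h)] at hA
    have hz : ((z₁ j₀ : ℤ) - z₂ j₀) ≠ 0 := by
      intro h
      apply hne
      exact_mod_cast sub_eq_zero.mp h
    have hy0 : (y j₀ : ℤ) = y' j₀ := by
      rcases mul_eq_zero.mp hA with h | h
      · linarith [sub_eq_zero.mp h]
      · exact absurd h hz
    funext j
    by_cases h : j = j₀
    · subst h; exact_mod_cast hy0
    · exact hoff j h

/-- Isolation lemma: for `k ≥ n^{8d}` there exists `y ∈ {0,…,k}^n` such that any two
distinct `z⁽¹⁾, z⁽²⁾ ∈ {0,…,d}^n` with `∑_j z⁽ⁱ⁾_j ≤ 2d` have distinct inner products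
with `y`. -/
theorem stmt_6 (n d k : ℕ) (hn : 0 < n) (hd : 0 < d) (hk : n ^ (8 * d) ≤ k) :
    ∃ y : Fin n → ℕ, (∀ j, y j ≤ k) ∧
      ∀ z₁ z₂ : Fin n → ℕ, z₁ ≠ z₂ →
        (∀ j, z₁ j ≤ d) → (∀ j, z₂ j ≤ d) →
        (∑ j, z₁ j) ≤ 2 * d → (∑ j, z₂ j) ≤ 2 * d →
        (∑ j, y j * z₁ j) ≠ ∑ j, y j * z₂ j := by
  classical
  by_cases hn2 : n < 2
  · have hn1 : n = 1 := by omega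
    subst hn1
    have hk1 : 1 ≤ k := by simpa using hk
    refine ⟨fun _ => 1, fun _ => hk1, ?_⟩
    intro z₁ z₂ hne _ _ _ _ heq
    apply hne
    funext j
    have h0 : j = (0 : Fin 1) := Subsingleton.elim _ _
    subst h0
    simpa [Fin.sum_univ_one] using heq
  · push_neg at hn2
    set S := (Fintype.piFinset fun _ : Fin n => Finset.range (d+1)).filter
      (fun z => ∑ j, z j ≤ 2*d) with hS
    set cube := Fintype.piFinset fun _ : Fin n => Finset.range (k+1) with hcube
    set P := (S ×ˢ S).filter (fun p => p.1 ≠ p.2) with hP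
    set Bad := cube.filter (fun y => ∃ z₁ ∈ S, ∃ z₂ ∈ S, z₁ ≠ z₂ ∧
      ∑ j, y j * z₁ j = ∑ j, y j * z₂ j) with hBad
    have hsub : Bad ⊆ P.biUnion (fun p =>
        cube.filter (fun y => ∑ j, y j * p.1 j = ∑ j, y j * p.2 j)) := by
      intro y hy
      simp only [hBad, Finset.mem_filter] at hy
      obtain ⟨hyc, z₁, hz₁, z₂, hz₂, hzne, heq⟩ := hy
      refine Finset.mem_biUnion.mpr ⟨(z₁, z₂), ?_, ?_⟩
      · simp only [hP, Finset.mem_filter, Finset.mem_product]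
        exact ⟨⟨hz₁, hz₂⟩, hzne⟩
      · exact Finset.mem_filter.mpr ⟨hyc, heq⟩
    have hbound : ∀ p ∈ P,
        (cube.filter (fun y => ∑ j, y j * p.1 j = ∑ j, y j * p.2 j)).card ≤ (k+1)^(n-1) := by
      intro p hp
      simp only [hP, Finset.mem_filter] at hp
      obtain ⟨j₀, hj₀⟩ := Function.ne_iff.mp hp.2
      exact hyper_card n k p.1 p.2 j₀ hj₀
    have hBadcard : Bad.card ≤ P.card * (k+1)^(n-1) := by
      calc Bad.card ≤ _ := Finset.card_le_card hsub
        _ ≤ ∑ p ∈ P, (cube.filter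
            (fun y => ∑ j, y j * p.1 j = ∑ j, y j * p.2 j)).card := Finset.card_biUnion_le
        _ ≤ ∑ _p ∈ P, (k+1)^(n-1) := Finset.sum_le_sum hbound
        _ = P.card * (k+1)^(n-1) := by rw [Finset.sum_const, smul_eq_mul]
    have hSc : S.card ≤ (n+1)^(2*d) := sparse_card n d
    have h0S : (fun _ => 0 : Fin n → ℕ) ∈ S := by
      simp [hS, Fintype.mem_piFinset]
    have h0P : ((fun _ => 0, fun _ => 0) : (Fin n → ℕ) × (Fin n → ℕ)) ∉ P := by
      simp [hP]
    have hPcard : P.card < S.card * S.card := by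
      have hss : P ⊂ S ×ˢ S :=
        ⟨Finset.filter_subset _ _,
          fun hsup => h0P (hsup (Finset.mem_product.mpr ⟨h0S, h0S⟩))⟩
      calc P.card < (S ×ˢ S).card := Finset.card_lt_card hss
        _ = S.card * S.card := Finset.card_product _ _
    have hPk : P.card < k + 1 := by
      have hh1 : S.card * S.card ≤ (n+1)^(2*d) * (n+1)^(2*d) := Nat.mul_le_mul hSc hSc
      have hh2 : (n+1)^(2*d) * (n+1)^(2*d) = (n+1)^(4*d) := by
        rw [← pow_add]; ring_nf
      have hh3 : (n+1)^(4*d) ≤ (n^2)^(4*d) := Nat.pow_le_pow_left (by nlinarith) _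
      have hh4 : (n^2)^(4*d) = n^(8*d) := by rw [← pow_mul]; ring_nf
      omega
    have hBadlt : Bad.card < cube.card := by
      have hc : cube.card = (k+1)^n := by
        rw [hcube, Fintype.card_piFinset]
        simp
      have hsplit : (k+1)^n = (k+1) * (k+1)^(n-1) := by
        rw [← pow_succ']
        congr 1
        omega
      have hlt : P.card * (k+1)^(n-1) < (k+1) * (k+1)^(n-1) :=
        Nat.mul_lt_mul_of_lt_of_le hPk (le_refl _) (Nat.pow_pos (by omega))
      omega
    have hns : ¬ cube ⊆ Bad := fun h => absurd (Finset.card_le_card h) (by omega)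
    obtain ⟨y, hyc, hyb⟩ := Finset.not_subset.mp hns
    refine ⟨y, ?_, ?_⟩
    · intro j
      have := Fintype.mem_piFinset.mp (by rwa [hcube] at hyc) j
      exact Nat.lt_succ_iff.mp (Finset.mem_range.mp this)
    · intro z₁ z₂ hzne hb1 hb2 hs1 hs2 heq
      apply hyb
      rw [hBad, Finset.mem_filter]
      refine ⟨hyc, z₁, ?_, z₂, ?_, hzne, heq⟩
      · rw [hS, Finset.mem_filter]
        exact ⟨Fintype.mem_piFinset.mpr fun j => Finset.mem_range.mpr (by have := hb1 j; omega), hs1⟩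
      · rw [hS, Finset.mem_filter]
        exact ⟨Fintype.mem_piFinset.mpr fun j => Finset.mem_range.mpr (by have := hb2 j; omega), hs2⟩
end

section
/- Let m > 0 and let h: [-m,m]^n → ℝ. If for every coordinate i ∈ [n] and every point a ∈ [-m,m]^n with a_i = 0, the univariate restriction x ↦ h(a + x·e_i) agrees with a polynomial of degree at most d on [-m,m], then h agrees with an n-variate polynomial of total degree at most dn on [-m,m]^n. -/
open MvPolynomial in
lemma stmt10_totalDegree_eval₂_le {σ : Type*} (i : σ) (L : Polynomial ℝ) :
    (Polynomial.eval₂ (C : ℝ →+* MvPolynomial σ ℝ) (X i) L).totalDegree ≤ L.natDegree := by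
  rw [Polynomial.eval₂_eq_sum, Polynomial.sum_def]
  refine totalDegree_finsetSum_le fun e he => ?_
  refine (totalDegree_mul _ _).trans ?_
  have h2 : (X i ^ e : MvPolynomial σ ℝ).totalDegree ≤ e := by
    simpa using totalDegree_pow (X i : MvPolynomial σ ℝ) e
  calc (C (L.coeff e) : MvPolynomial σ ℝ).totalDegree + (X i ^ e : MvPolynomial σ ℝ).totalDegree
      ≤ 0 + e := by rw [totalDegree_C]; exact add_le_add le_rfl h2
    _ ≤ L.natDegree := by simpa using Polynomial.le_natDegree_of_mem_supp e he

lemma stmt10_eval_eval₂ {σ : Type*} (x : σ → ℝ) (i : σ) (L : Polynomial ℝ) :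
    MvPolynomial.eval x (Polynomial.eval₂ MvPolynomial.C (MvPolynomial.X i) L) = L.eval (x i) := by
  rw [Polynomial.hom_eval₂]
  rw [MvPolynomial.eval_X]
  show _ = Polynomial.eval₂ (RingHom.id ℝ) _ _
  congr 1
  ext r
  simp

lemma stmt10_snoc1 {n : ℕ} (a : Fin n → ℝ) (t x : ℝ) (i : Fin n) :
    Fin.snoc a t + x • (Pi.single (Fin.castSucc i) 1 : Fin (n+1) → ℝ) =
      Fin.snoc (a + x • (Pi.single i 1 : Fin n → ℝ)) t := by
  funext j
  refine Fin.lastCases ?_ (fun j => ?_) j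
  · simp [Pi.single_eq_of_ne (Fin.castSucc_lt_last i).ne']
  · rcases eq_or_ne j i with rfl | hji
    · simp
    · simp [Pi.single_eq_of_ne hji, Pi.single_eq_of_ne (fun hc => hji (Fin.castSucc_injective _ hc))]

lemma stmt10_snoc2 {n : ℕ} (a : Fin n → ℝ) (x : ℝ) :
    Fin.snoc a 0 + x • (Pi.single (Fin.last n) 1 : Fin (n+1) → ℝ) = Fin.snoc a x := by
  funext j
  refine Fin.lastCases ?_ (fun j => ?_) j
  · simp
  · simp [Pi.single_eq_of_ne (Fin.castSucc_lt_last j).ne]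

lemma stmt10_key (d : ℕ) (m : ℝ) (hm : 0 < m) : ∀ (n : ℕ) (h : (Fin n → ℝ) → ℝ),
    (∀ i : Fin n, ∀ a : Fin n → ℝ, (∀ j, a j ∈ Set.Icc (-m) m) → a i = 0 →
      ∃ q : Polynomial ℝ, q.natDegree ≤ d ∧
        ∀ x ∈ Set.Icc (-m) m, h (a + x • (Pi.single i 1 : Fin n → ℝ)) = q.eval x) →
    ∃ P : MvPolynomial (Fin n) ℝ, P.totalDegree ≤ d * n ∧
      ∀ x : Fin n → ℝ, (∀ j, x j ∈ Set.Icc (-m) m) → h x = MvPolynomial.eval x P := by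
  intro n
  induction n with
  | zero =>
    intro h _
    refine ⟨MvPolynomial.C (h default), by simp, fun x _ => ?_⟩
    have : x = default := funext fun i => i.elim0
    simp [this]
  | succ n ih =>
    intro h hlines
    have hd1 : (0:ℝ) < (d:ℝ) + 1 := by positivity
    set v : Fin (d+1) → ℝ := fun k => m * k / (d+1) with hv
    have hvinj : Function.Injective v := by
      intro k k' hkk
      have h2 : ((k:ℕ):ℝ) = ((k':ℕ):ℝ) := by
        simp only [hv] at hkk
        field_simp at hkk
        exact hkk
      exact Fin.ext (by exact_mod_cast h2)
    have hvmem : ∀ k, v k ∈ Set.Icc (-m) m := by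
      intro k
      constructor
      · have : (0:ℝ) ≤ v k := by positivity
        linarith
      · rw [hv]
        rw [div_le_iff₀ hd1]
        have hk : (k:ℝ) ≤ (d:ℝ) + 1 := by
          have := k.isLt
          exact_mod_cast this.le
        nlinarith
    have hzero : (0:ℝ) ∈ Set.Icc (-m) m := ⟨by linarith, hm.le⟩
    have hsnocmem : ∀ (a : Fin n → ℝ) (t : ℝ), (∀ j, a j ∈ Set.Icc (-m) m) →
        t ∈ Set.Icc (-m) m → ∀ j, (Fin.snoc a t : Fin (n+1) → ℝ) j ∈ Set.Icc (-m) m := by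
      intro a t ha ht j
      refine Fin.lastCases ?_ (fun j => ?_) j <;> simp [ha, ht]
    have hslice : ∀ k : Fin (d+1), ∃ P : MvPolynomial (Fin n) ℝ, P.totalDegree ≤ d * n ∧
        ∀ y : Fin n → ℝ, (∀ j, y j ∈ Set.Icc (-m) m) →
          h (Fin.snoc y (v k)) = MvPolynomial.eval y P := by
      intro k
      apply ih (fun y => h (Fin.snoc y (v k)))
      intro i a ha hai
      obtain ⟨q, hq, hqe⟩ := hlines i.castSucc (Fin.snoc a (v k))
        (hsnocmem a (v k) ha (hvmem k)) (by simpa using hai)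
      exact ⟨q, hq, fun x hx => by rw [← hqe x hx, stmt10_snoc1]⟩
    choose P hPdeg hPval using hslice
    refine ⟨∑ k : Fin (d+1), (MvPolynomial.rename Fin.castSucc (P k)) *
        Polynomial.eval₂ MvPolynomial.C (MvPolynomial.X (Fin.last n))
          (Lagrange.basis Finset.univ v k), ?_, ?_⟩
    · apply MvPolynomial.totalDegree_finsetSum_le
      intro k _
      refine (MvPolynomial.totalDegree_mul _ _).trans ?_
      have h1 : (MvPolynomial.rename Fin.castSucc (P k)).totalDegree ≤ d * n :=
        (MvPolynomial.totalDegree_rename_le _ _).trans (hPdeg k)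
      have h2 : (Polynomial.eval₂ MvPolynomial.C (MvPolynomial.X (Fin.last n))
          (Lagrange.basis Finset.univ v k)).totalDegree ≤ d := by
        refine (stmt10_totalDegree_eval₂_le _ _).trans ?_
        rw [Lagrange.natDegree_basis hvinj.injOn (Finset.mem_univ k)]
        simp
      calc _ ≤ d * n + d := add_le_add h1 h2
        _ = d * (n + 1) := by ring
    · intro x hx
      obtain ⟨q, hq, hqe⟩ := hlines (Fin.last n) (Fin.snoc (Fin.init x) 0)
        (hsnocmem _ _ (fun j => hx _) hzero) (by simp)
      have hxval : h x = q.eval (x (Fin.last n)) := by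
        rw [← hqe _ (hx _), stmt10_snoc2, Fin.snoc_init_self]
      have hnode : ∀ k, q.eval (v k) = MvPolynomial.eval (Fin.init x) (P k) := by
        intro k
        rw [← hPval k (Fin.init x) (fun j => hx _), ← hqe (v k) (hvmem k), stmt10_snoc2]
      have hdeg : q.degree < (Finset.univ : Finset (Fin (d+1))).card := by
        rw [Finset.card_univ, Fintype.card_fin]
        exact lt_of_le_of_lt Polynomial.degree_le_natDegree
          (by exact_mod_cast Nat.lt_succ_of_le hq)
      have hinterp := Lagrange.eq_interpolate hvinj.injOn hdeg
      rw [hxval]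
      conv_lhs => rw [hinterp]
      rw [Lagrange.interpolate_apply, map_sum, Polynomial.eval_finset_sum]
      refine Finset.sum_congr rfl fun k _ => ?_
      rw [map_mul, MvPolynomial.eval_rename, stmt10_eval_eval₂, Polynomial.eval_mul,
        Polynomial.eval_C, hnode k]
      rfl

/-- Local to global: if every axis-parallel restriction of `h` (through a point with
vanishing `i`-th coordinate, in direction `e_i`) agrees with a univariate polynomial
of degree at most `d` on `[-m,m]`, then `h` agrees with an `n`-variate polynomial of
total degree at most `dn` on `[-m,m]^n`. -/
theorem stmt_10 (n d : ℕ) (m : ℝ) (hm : 0 < m) (h : (Fin n → ℝ) → ℝ)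
    (hlines : ∀ i : Fin n, ∀ a : Fin n → ℝ, (∀ j, a j ∈ Set.Icc (-m) m) → a i = 0 →
      ∃ q : Polynomial ℝ, q.natDegree ≤ d ∧
        ∀ x ∈ Set.Icc (-m) m, h (a + x • (Pi.single i 1 : Fin n → ℝ)) = q.eval x) :
    ∃ P : MvPolynomial (Fin n) ℝ, P.totalDegree ≤ d * n ∧
      ∀ x : Fin n → ℝ, (∀ j, x j ∈ Set.Icc (-m) m) → h x = MvPolynomial.eval x P :=
  stmt10_key d m hm n h hlines
end

section
/- Let m ∈ (0,1], n ≥ 2, and let p be an n-variate polynomial of total degree at most ℓ, where d ≤ ℓ. If for every a ∈ [-m,m]^n, the univariate restriction t ↦ p(a·t) is pointwise ε-close to some polynomial of degree at most d on the interval t ∈ [-1,1], then p is pointwise η-close to its degree-d truncation p^{≤d} on [-m,m]^n, where η = 2·(2/m)^{2n^{18ℓ}}·ε. -/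
open Polynomial Finset

lemma aux_prod_coeff {ι : Type*} [DecidableEq ι] (T : Finset ι) (w : ι → ℝ)
    (hw : ∀ j ∈ T, |w j| ≤ 1) (k : ℕ) :
    |(∏ j ∈ T, (Polynomial.X - Polynomial.C (w j))).coeff k| ≤ 2 ^ T.card := by
  induction T using Finset.induction_on generalizing k with
  | empty =>
    simp only [Finset.prod_empty, Polynomial.coeff_one, Finset.card_empty, pow_zero]
    split <;> simp
  | @insert a T ha ih =>
    have hwa : |w a| ≤ 1 := hw a (Finset.mem_insert_self a T)
    have hw' : ∀ j ∈ T, |w j| ≤ 1 := fun j hj => hw j (Finset.mem_insert_of_mem hj)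
    rw [Finset.prod_insert ha, Finset.card_insert_of_notMem ha]
    set P := ∏ j ∈ T, (Polynomial.X - Polynomial.C (w j)) with hP
    have expand : ((Polynomial.X - Polynomial.C (w a)) * P).coeff k
        = (Polynomial.X * P).coeff k - w a * P.coeff k := by
      rw [sub_mul, Polynomial.coeff_sub, Polynomial.coeff_C_mul]
    rw [expand]
    have hXP : |(Polynomial.X * P).coeff k| ≤ 2 ^ T.card := by
      cases k with
      | zero =>
        rw [Polynomial.mul_coeff_zero, Polynomial.coeff_X_zero, zero_mul, abs_zero]
        positivity
      | succ k' => rw [Polynomial.coeff_X_mul]; exact ih hw' k'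
    calc |(Polynomial.X * P).coeff k - w a * P.coeff k|
        ≤ |(Polynomial.X * P).coeff k| + |w a * P.coeff k| := abs_sub _ _
      _ ≤ 2 ^ T.card + 1 * 2 ^ T.card := by
          gcongr
          rw [abs_mul]
          exact mul_le_mul hwa (ih hw' k) (abs_nonneg _) zero_le_one
      _ = 2 ^ (T.card + 1) := by ring

-- coefficient bound for polynomials small on [-1,1]
lemma aux_coeff_bound (N : ℕ) (hN : 1 ≤ N) (ε : ℝ) (s : Polynomial ℝ)
    (hs : s.natDegree ≤ N) (h : ∀ t ∈ Set.Icc (-1 : ℝ) 1, |s.eval t| ≤ ε) (k : ℕ) :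
    |s.coeff k| ≤ ((N : ℝ) + 1) * ((N : ℝ) ^ N * ε) := by
  have hε : 0 ≤ ε := le_trans (abs_nonneg _) (h 0 (by constructor <;> norm_num))
  have hN0 : (0 : ℝ) < N := by exact_mod_cast hN
  set v : ℕ → ℝ := fun i => 2 * (i : ℝ) / N - 1 with hv
  have hvinj : Set.InjOn v ↑(Finset.range (N + 1)) := by
    intro i _ j _ hij
    simp only [hv] at hij
    field_simp at hij
    exact_mod_cast (by linarith : (i:ℝ) = j)
  have hdeg : s.degree < (Finset.range (N + 1)).card := by
    rw [Finset.card_range]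
    calc s.degree ≤ (s.natDegree : WithBot ℕ) := Polynomial.degree_le_natDegree
      _ ≤ (N : WithBot ℕ) := by exact_mod_cast hs
      _ < ((N + 1 : ℕ) : WithBot ℕ) := by exact_mod_cast Nat.lt_succ_self N
  have hinterp := Lagrange.eq_interpolate hvinj hdeg
  -- bound on node values
  have hval : ∀ i ∈ Finset.range (N + 1), |s.eval (v i)| ≤ ε := by
    intro i hi
    apply h
    rw [Finset.mem_range, Nat.lt_succ_iff] at hi
    have h1 : (i : ℝ) ≤ N := by exact_mod_cast hi
    have h0 : (0 : ℝ) ≤ i := Nat.cast_nonneg i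
    constructor
    · simp only [hv]
      have : (0:ℝ) ≤ 2 * (i:ℝ) / N := by positivity
      linarith
    · simp only [hv]
      rw [sub_le_iff_le_add, div_le_iff₀ hN0]
      linarith
  -- bound on basis coefficients
  have hbasis : ∀ i ∈ Finset.range (N + 1),
      |(Lagrange.basis (Finset.range (N + 1)) v i).coeff k| ≤ (N : ℝ) ^ N := by
    intro i hi
    rw [Lagrange.basis]
    simp only [Lagrange.basisDivisor]
    rw [Finset.prod_mul_distrib, ← map_prod, Polynomial.coeff_C_mul, abs_mul]
    have hcard : ((Finset.range (N + 1)).erase i).card = N := by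
      rw [Finset.card_erase_of_mem hi, Finset.card_range]; omega
    have h1 : |∏ j ∈ (Finset.range (N + 1)).erase i, (v i - v j)⁻¹| ≤ ((N : ℝ) / 2) ^ N := by
      rw [Finset.abs_prod]
      calc ∏ j ∈ (Finset.range (N + 1)).erase i, |(v i - v j)⁻¹|
          ≤ ∏ _j ∈ (Finset.range (N + 1)).erase i, ((N : ℝ) / 2) := ?_
        _ = ((N : ℝ) / 2) ^ N := by rw [Finset.prod_const, hcard]
      apply Finset.prod_le_prod (fun _ _ => abs_nonneg _)
      intro j hj
      obtain ⟨hji, hjr⟩ := Finset.mem_erase.mp hj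
      have hne : v i - v j ≠ 0 := sub_ne_zero.mpr
        (fun hc => hji ((hvinj (Finset.mem_coe.mpr hi) (Finset.mem_coe.mpr hjr) hc).symm))
      have hij1 : (1 : ℝ) ≤ |(i : ℝ) - (j : ℝ)| := by
        have hz : ((i : ℤ) - j) ≠ 0 := by
          intro hc; apply hji; omega
        have := Int.one_le_abs hz
        calc (1 : ℝ) ≤ |((i : ℤ) - j : ℤ)| := by exact_mod_cast this
          _ = |(i : ℝ) - j| := by push_cast; ring_nf
      have hval : v i - v j = 2 * ((i : ℝ) - j) / N := by
        simp only [hv]; field_simp; ring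
      have hlow : 2 / (N : ℝ) ≤ |v i - v j| := by
        rw [hval, abs_div, abs_mul, abs_of_nonneg hN0.le, abs_two]
        gcongr
        linarith
      rw [abs_inv, inv_le_comm₀ (abs_pos.mpr hne) (by positivity), inv_div]
      exact hlow
    have h2 : |(∏ j ∈ (Finset.range (N + 1)).erase i,
        (Polynomial.X - Polynomial.C (v j))).coeff k| ≤ 2 ^ N := by
      have key := aux_prod_coeff ((Finset.range (N + 1)).erase i) v ?_ k
      · rwa [hcard] at key
      intro j hj
      obtain ⟨_, hjr⟩ := Finset.mem_erase.mp hj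
      rw [Finset.mem_range, Nat.lt_succ_iff] at hjr
      have h1 : (j : ℝ) ≤ N := by exact_mod_cast hjr
      rw [abs_le]
      constructor
      · simp only [hv]
        have : (0:ℝ) ≤ 2 * (j:ℝ) / N := by positivity
        linarith
      · simp only [hv]; rw [sub_le_iff_le_add, div_le_iff₀ hN0]; linarith
    calc |∏ j ∈ (Finset.range (N + 1)).erase i, (v i - v j)⁻¹| *
          |(∏ j ∈ (Finset.range (N + 1)).erase i, (Polynomial.X - Polynomial.C (v j))).coeff k|
        ≤ ((N : ℝ) / 2) ^ N * 2 ^ N := by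
          apply mul_le_mul h1 h2 (abs_nonneg _) (by positivity)
      _ = (N : ℝ) ^ N := by rw [div_pow, div_mul_cancel₀]; positivity
  calc |s.coeff k|
      = |∑ i ∈ Finset.range (N + 1), s.eval (v i) * (Lagrange.basis (Finset.range (N + 1)) v i).coeff k| := by
        conv_lhs => rw [hinterp]
        rw [Lagrange.interpolate_apply, Polynomial.finset_sum_coeff]
        simp_rw [Polynomial.coeff_C_mul]
    _ ≤ ∑ i ∈ Finset.range (N + 1), |s.eval (v i) * (Lagrange.basis (Finset.range (N + 1)) v i).coeff k| :=
        Finset.abs_sum_le_sum_abs _ _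
    _ ≤ ∑ i ∈ Finset.range (N + 1), (N : ℝ) ^ N * ε := by
        apply Finset.sum_le_sum
        intro i hi
        rw [abs_mul, mul_comm ((N:ℝ)^N) ε]
        exact mul_le_mul (hval i hi) (hbasis i hi) (abs_nonneg _) hε
    _ = ((N : ℝ) + 1) * ((N : ℝ) ^ N * ε) := by
        rw [Finset.sum_const, Finset.card_range, nsmul_eq_mul]
        push_cast; ring


lemma aux_num (ℓ : ℕ) (hl : 1 ≤ ℓ) : ℓ * ((ℓ + 1) * ℓ ^ ℓ) ≤ 2 ^ (2 * 2 ^ (18 * ℓ)) := by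
  have h1 : ℓ + 1 ≤ 2 ^ ℓ := Nat.lt_two_pow_self (n := ℓ)
  have h2 : ℓ ≤ 2 ^ ℓ := (Nat.lt_two_pow_self (n := ℓ)).le
  have h3 : ℓ ^ ℓ ≤ (2 ^ ℓ) ^ ℓ := Nat.pow_le_pow_left h2 ℓ
  have h4 : ℓ * ((ℓ + 1) * ℓ ^ ℓ) ≤ 2 ^ ℓ * (2 ^ ℓ * (2 ^ ℓ) ^ ℓ) :=
    Nat.mul_le_mul h2 (Nat.mul_le_mul h1 h3)
  have h5 : 2 ^ ℓ * (2 ^ ℓ * (2 ^ ℓ) ^ ℓ) = 2 ^ (ℓ + (ℓ + ℓ * ℓ)) := by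
    rw [← pow_mul, ← pow_add, ← pow_add]
  have h6 : ℓ + (ℓ + ℓ * ℓ) ≤ 2 * 2 ^ (18 * ℓ) := by
    have ha : ℓ * ℓ ≤ 2 ^ (9 * ℓ) * 2 ^ (9 * ℓ) := by
      have : ℓ ≤ 2 ^ (9 * ℓ) := h2.trans (Nat.pow_le_pow_right (by norm_num) (by omega))
      exact Nat.mul_le_mul this this
    have hb : 2 ^ (9 * ℓ) * 2 ^ (9 * ℓ) = 2 ^ (18 * ℓ) := by
      rw [← pow_add]; ring_nf
    have hc : ℓ + ℓ ≤ 2 ^ (18 * ℓ) := by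
      have : ℓ + ℓ ≤ 2 ^ (ℓ + 1) := by
        have := Nat.lt_two_pow_self (n := ℓ)
        calc ℓ + ℓ ≤ 2 * ℓ := by omega
          _ ≤ 2 * 2 ^ ℓ := by omega
          _ = 2 ^ (ℓ + 1) := by ring
      exact this.trans (Nat.pow_le_pow_right (by norm_num) (by omega))
    omega
  calc ℓ * ((ℓ + 1) * ℓ ^ ℓ) ≤ 2 ^ (ℓ + (ℓ + ℓ * ℓ)) := by omega
    _ ≤ 2 ^ (2 * 2 ^ (18 * ℓ)) := Nat.pow_le_pow_right (by norm_num) h6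

/-- Multivariate degree reduction: if every radial-line restriction of an `n`-variate
polynomial `p` of total degree at most `ℓ` is pointwise `ε`-close to a degree-`d`
polynomial on `[-1,1]`, then `p` is pointwise `2(2/m)^{2n^{18ℓ}}ε`-close to its
degree-`d` truncation on `[-m,m]^n`. -/
theorem stmt_18 (n d ℓ : ℕ) (hn : 2 ≤ n) (hdℓ : d ≤ ℓ) (m ε : ℝ)
    (hm : 0 < m) (hm1 : m ≤ 1) (p : MvPolynomial (Fin n) ℝ) (hdeg : p.totalDegree ≤ ℓ)
    (hlines : ∀ a : Fin n → ℝ, (∀ j, a j ∈ Set.Icc (-m) m) →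
      ∃ q : Polynomial ℝ, q.natDegree ≤ d ∧
        ∀ t ∈ Set.Icc (-1 : ℝ) 1,
          |MvPolynomial.eval (fun j => a j * t) p - q.eval t| ≤ ε) :
    ∀ x : Fin n → ℝ, (∀ j, x j ∈ Set.Icc (-m) m) →
      |MvPolynomial.eval x p -
          ∑ I ∈ p.support.filter (fun I => (I.sum fun _ e => e) ≤ d),
            p.coeff I * ∏ j, x j ^ I j|
        ≤ 2 * (2 / m) ^ (2 * n ^ (18 * ℓ)) * ε := by
  classical
  intro x hx
  obtain ⟨q, hqd, hqe⟩ := hlines x hx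
  have hε : 0 ≤ ε := le_trans (abs_nonneg _) (hqe 0 ⟨by norm_num, by norm_num⟩)
  have hRHS0 : 0 ≤ 2 * (2 / m) ^ (2 * n ^ (18 * ℓ)) * ε := by
    apply mul_nonneg (mul_nonneg (by norm_num) (pow_nonneg (by positivity) _)) hε
  set e : (Fin n →₀ ℕ) → ℕ := fun I => I.sum fun _ k => k with he
  set f : (Fin n →₀ ℕ) → ℝ := fun I => p.coeff I * ∏ j, x j ^ I j with hf
  have hesum : ∀ I : Fin n →₀ ℕ, e I = ∑ j, I j := fun I =>
    Finsupp.sum_fintype _ _ (fun _ => rfl)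
  have hel : ∀ I ∈ p.support, e I ≤ ℓ := fun I hI =>
    le_trans (MvPolynomial.le_totalDegree hI) hdeg
  have hediff : MvPolynomial.eval x p - ∑ I ∈ p.support.filter (fun I => e I ≤ d), f I
      = ∑ I ∈ p.support.filter (fun I => ¬ e I ≤ d), f I := by
    rw [MvPolynomial.eval_eq']
    rw [← Finset.sum_filter_add_sum_filter_not p.support (fun I => e I ≤ d) f]
    ring
  set r : Polynomial ℝ := ∑ I ∈ p.support, Polynomial.C (f I) * Polynomial.X ^ (e I) with hr
  have hrdeg : r.natDegree ≤ ℓ := by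
    apply Polynomial.natDegree_sum_le_of_forall_le
    intro I hI
    exact le_trans (Polynomial.natDegree_C_mul_X_pow_le _ _) (hel I hI)
  have hreval : ∀ t : ℝ, r.eval t = MvPolynomial.eval (fun j => x j * t) p := by
    intro t
    rw [MvPolynomial.eval_eq', hr, Polynomial.eval_finset_sum]
    apply Finset.sum_congr rfl
    intro I _
    rw [Polynomial.eval_mul, Polynomial.eval_C, Polynomial.eval_pow, Polynomial.eval_X, hf]
    have : ∏ j, (x j * t) ^ I j = (∏ j, x j ^ I j) * t ^ e I := by
      simp_rw [mul_pow]
      rw [Finset.prod_mul_distrib, Finset.prod_pow_eq_pow_sum, hesum I]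
    rw [this]; ring
  set s : Polynomial ℝ := r - q with hs
  have hsdeg : s.natDegree ≤ ℓ :=
    le_trans (Polynomial.natDegree_sub_le _ _) (max_le hrdeg (le_trans hqd hdℓ))
  have hsb : ∀ t ∈ Set.Icc (-1 : ℝ) 1, |s.eval t| ≤ ε := by
    intro t ht
    rw [hs, Polynomial.eval_sub, hreval t]
    exact hqe t ht
  have hrc : ∀ k, r.coeff k = ∑ I ∈ p.support.filter (fun I => e I = k), f I := by
    intro k
    rw [hr, Polynomial.finset_sum_coeff, Finset.sum_filter]
    apply Finset.sum_congr rfl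
    intro I _
    rw [Polynomial.coeff_C_mul, Polynomial.coeff_X_pow]
    by_cases hik : e I = k
    · simp [hik]
    · simp [hik, Ne.symm hik]
  have key : ∑ I ∈ p.support.filter (fun I => ¬ e I ≤ d), f I
      = ∑ k ∈ Finset.Ioc d ℓ, s.coeff k := by
    have hmaps : ∀ I ∈ p.support.filter (fun I => ¬ e I ≤ d), e I ∈ Finset.Ioc d ℓ := by
      intro I hI
      rw [Finset.mem_filter] at hI
      rw [Finset.mem_Ioc]
      exact ⟨Nat.lt_of_not_le hI.2, hel I hI.1⟩
    rw [← Finset.sum_fiberwise_of_maps_to hmaps f]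
    apply Finset.sum_congr rfl
    intro k hk
    rw [Finset.mem_Ioc] at hk
    have hq0 : q.coeff k = 0 :=
      Polynomial.coeff_eq_zero_of_natDegree_lt (lt_of_le_of_lt hqd hk.1)
    rw [hs, Polynomial.coeff_sub, hq0, sub_zero, hrc k, Finset.filter_filter]
    apply Finset.sum_congr _ (fun _ _ => rfl)
    apply Finset.filter_congr
    intro I _
    constructor
    · exact fun h => h.2
    · exact fun h => ⟨by omega, h⟩
  rw [hediff, key]
  by_cases hcase : d < ℓ
  · have hl1 : 1 ≤ ℓ := by omega
    have hcb := aux_coeff_bound ℓ hl1 ε s hsdeg hsb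
    have step1 : |∑ k ∈ Finset.Ioc d ℓ, s.coeff k|
        ≤ (ℓ : ℝ) * (((ℓ : ℝ) + 1) * ((ℓ : ℝ) ^ ℓ * ε)) := by
      calc |∑ k ∈ Finset.Ioc d ℓ, s.coeff k|
          ≤ ∑ k ∈ Finset.Ioc d ℓ, |s.coeff k| := Finset.abs_sum_le_sum_abs _ _
        _ ≤ ∑ _k ∈ Finset.Ioc d ℓ, ((ℓ : ℝ) + 1) * ((ℓ : ℝ) ^ ℓ * ε) :=
            Finset.sum_le_sum (fun k _ => hcb k)
        _ = ((Finset.Ioc d ℓ).card : ℝ) * (((ℓ : ℝ) + 1) * ((ℓ : ℝ) ^ ℓ * ε)) := by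
            rw [Finset.sum_const, nsmul_eq_mul]
        _ ≤ (ℓ : ℝ) * (((ℓ : ℝ) + 1) * ((ℓ : ℝ) ^ ℓ * ε)) := by
            apply mul_le_mul_of_nonneg_right
            · rw [Nat.card_Ioc]
              exact_mod_cast Nat.sub_le ℓ d
            · positivity
    have hnat := aux_num ℓ hl1
    have step2 : (ℓ : ℝ) * (((ℓ : ℝ) + 1) * ((ℓ : ℝ) ^ ℓ * ε))
        ≤ (2 : ℝ) ^ (2 * 2 ^ (18 * ℓ)) * ε := by
      have hcast : ((ℓ * ((ℓ + 1) * ℓ ^ ℓ) : ℕ) : ℝ) ≤ ((2 ^ (2 * 2 ^ (18 * ℓ)) : ℕ) : ℝ) := by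
        exact_mod_cast hnat
      push_cast at hcast
      calc (ℓ : ℝ) * (((ℓ : ℝ) + 1) * ((ℓ : ℝ) ^ ℓ * ε))
          = ((ℓ : ℝ) * (((ℓ : ℝ) + 1) * (ℓ : ℝ) ^ ℓ)) * ε := by ring
        _ ≤ (2 : ℝ) ^ (2 * 2 ^ (18 * ℓ)) * ε := mul_le_mul_of_nonneg_right hcast hε
    have h2m : (2 : ℝ) ≤ 2 / m := by
      rw [le_div_iff₀ hm]; nlinarith
    have step3 : (2 : ℝ) ^ (2 * 2 ^ (18 * ℓ)) ≤ (2 / m) ^ (2 * n ^ (18 * ℓ)) := by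
      calc (2 : ℝ) ^ (2 * 2 ^ (18 * ℓ)) ≤ (2 : ℝ) ^ (2 * n ^ (18 * ℓ)) := by
            apply pow_le_pow_right₀ (by norm_num)
            exact Nat.mul_le_mul_left 2 (Nat.pow_le_pow_left hn _)
        _ ≤ (2 / m) ^ (2 * n ^ (18 * ℓ)) := pow_le_pow_left₀ (by norm_num) h2m _
    have hpow0 : (0 : ℝ) ≤ (2 / m) ^ (2 * n ^ (18 * ℓ)) := by positivity
    calc |∑ k ∈ Finset.Ioc d ℓ, s.coeff k|
        ≤ (2 : ℝ) ^ (2 * 2 ^ (18 * ℓ)) * ε := step1.trans step2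
      _ ≤ (2 / m) ^ (2 * n ^ (18 * ℓ)) * ε := mul_le_mul_of_nonneg_right step3 hε
      _ ≤ 2 * (2 / m) ^ (2 * n ^ (18 * ℓ)) * ε := by nlinarith
  · have hdl : d = ℓ := by omega
    subst hdl
    rw [Finset.Ioc_self, Finset.sum_empty, abs_zero]
    exact hRHS0
end
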